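/- arXiv:2202.01853 — 10 statements merged into one kernel-verified Lean document; each statement's English description precedes it below -/
import Mathlib

section
/- Let H be a complex Hilbert space and A a bounded linear operator on H with Hilbert-space adjoint A*. Suppose A is complex symmetric: there exists a map J : H → H that is additive, conjugate-homogeneous (J(c • x) = conj(c) • J(x) for all c ∈ ℂ and x ∈ H), isometric (‖J x‖ = ‖x‖ for all x), an involution (J(J(x)) = x for all x), and satisfies J(A(J(x))) = A*(x) for all x ∈ H. Then there exists a bounded linear operator T on H with A = A* ∘ T if and only if there exists a bounded linear operator S on H with A* = A ∘ S; that is, A is posinormal if and only if A is coposinormal. -/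
/-- Conjugating a bounded operator by a conjugate-linear isometric involution
gives a bounded operator. -/
lemma exists_conj_op
    {H : Type*} [NormedAddCommGroup H] [InnerProductSpace ℂ H]
    (J : H → H)
    (hJadd : ∀ x y : H, J (x + y) = J x + J y)
    (hJsmul : ∀ (c : ℂ) (x : H), J (c • x) = (starRingEnd ℂ) c • J x)
    (hJiso : ∀ x : H, ‖J x‖ = ‖x‖)
    (T : H →L[ℂ] H) :
    ∃ T' : H →L[ℂ] H, ∀ x : H, T' x = J (T (J x)) := by
  refine ⟨LinearMap.mkContinuous
    { toFun := fun x => J (T (J x))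
      map_add' := by intro x y; rw [hJadd, map_add, hJadd]
      map_smul' := by
        intro c x
        simp only [RingHom.id_apply]
        rw [hJsmul, map_smul, hJsmul]
        simp } ‖T‖ ?_, fun x => rfl⟩
  intro x
  simp only [LinearMap.coe_mk, AddHom.coe_mk]
  rw [hJiso]
  calc ‖T (J x)‖ ≤ ‖T‖ * ‖J x‖ := T.le_opNorm _
    _ = ‖T‖ * ‖x‖ := by rw [hJiso]

/-- If a bounded operator `A` on a complex Hilbert space is complex symmetric
(witnessed by a conjugate-linear isometric involution `J` with `J ∘ A ∘ J = A*`),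
then `A` is posinormal (`A = A* ∘ T` for some bounded `T`) if and only if `A` is
coposinormal (`A* = A ∘ S` for some bounded `S`). -/
theorem posinormal_iff_coposinormal_of_complexSymmetric
    {H : Type*} [NormedAddCommGroup H] [InnerProductSpace ℂ H] [CompleteSpace H]
    (A : H →L[ℂ] H) (J : H → H)
    (hJadd : ∀ x y : H, J (x + y) = J x + J y)
    (hJsmul : ∀ (c : ℂ) (x : H), J (c • x) = (starRingEnd ℂ) c • J x)
    (hJiso : ∀ x : H, ‖J x‖ = ‖x‖)
    (hJinv : ∀ x : H, J (J x) = x)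
    (hJsym : ∀ x : H, J (A (J x)) = (ContinuousLinearMap.adjoint A) x) :
    (∃ T : H →L[ℂ] H, A = (ContinuousLinearMap.adjoint A).comp T) ↔
      (∃ S : H →L[ℂ] H, (ContinuousLinearMap.adjoint A) = A.comp S) := by
  have hAJ : ∀ y : H, A (J y) = J ((ContinuousLinearMap.adjoint A) y) := by
    intro y
    rw [← hJsym y, hJinv]
  have hA'J : ∀ y : H, (ContinuousLinearMap.adjoint A) (J y) = J (A y) := by
    intro y; rw [← hJsym (J y), hJinv]
  constructor
  · rintro ⟨T, hT⟩
    obtain ⟨S, hS⟩ := exists_conj_op J hJadd hJsmul hJiso T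
    refine ⟨S, ContinuousLinearMap.ext fun x => ?_⟩
    have hTx : ∀ z, A z = (ContinuousLinearMap.adjoint A) (T z) :=
      fun z => ContinuousLinearMap.ext_iff.mp hT z
    simp only [ContinuousLinearMap.comp_apply, hS]
    calc (ContinuousLinearMap.adjoint A) x
        = J (A (J x)) := (hJsym x).symm
      _ = J ((ContinuousLinearMap.adjoint A) (T (J x))) := by rw [← hTx]
      _ = A (J (T (J x))) := (hAJ _).symm
  · rintro ⟨S, hS⟩
    obtain ⟨T, hT⟩ := exists_conj_op J hJadd hJsmul hJiso S
    refine ⟨T, ContinuousLinearMap.ext fun x => ?_⟩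
    have hSx : ∀ z, (ContinuousLinearMap.adjoint A) z = A (S z) :=
      fun z => ContinuousLinearMap.ext_iff.mp hS z
    simp only [ContinuousLinearMap.comp_apply, hT]
    calc A x
        = J (J (A x)) := (hJinv _).symm
      _ = J ((ContinuousLinearMap.adjoint A) (J x)) := by rw [hA'J]
      _ = J (A (S (J x))) := by rw [← hSx]
      _ = (ContinuousLinearMap.adjoint A) (J (S (J x))) := by rw [hA'J]
end

section
/- Let a, b, c, d ∈ ℂ with ad − bc ≠ 0 and let φ(z) = (az+b)/(cz+d) be a selfmap of 𝔻 (cz+d ≠ 0 and |φ(z)| < 1 for all z ∈ 𝔻). Assume that there do not exist α ∈ 𝔻 and z ∈ ℂ such that cz + d ≠ 0, |φ(z)| < 1, and conj(φ(α)) · z = 1 (i.e., the set 1/conj(φ(𝔻)) does not meet the preimage of 𝔻 under φ). Then the linear-fractional map σ∘φ⁻¹, given explicitly by Ψ(z) = ((conj(a)·d + conj(c)·c)·z − (conj(a)·b + conj(c)·a)) / ((−conj(b)·d − conj(d)·c)·z + (conj(b)·b + conj(d)·a)), maps 𝔻 into 𝔻: for every z ∈ 𝔻 its denominator is nonzero and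 |Ψ(z)| < 1. -/
/-!
Write `Ψ = M / N` for the displayed map. The identities
`conj a * N + conj b * M = conj (ad - bc) * (a - c z)` and
`conj c * N + conj d * M = conj (ad - bc) * (d z - b)` express `Ψ = σ ∘ φ⁻¹`, and show that
`conj (φ α) * φ⁻¹ z = 1` as soon as `conj α = N z / M z`. Hence a point `z ∈ 𝔻` with
`‖N z‖ < ‖M z‖` would give `α = conj (N z / M z) ∈ 𝔻` and `φ⁻¹ z ∈ φ⁻¹(𝔻)` that the hypothesis
excludes, so `‖M‖ ≤ ‖N‖` on `𝔻` (first away from `z = a / c`, where `φ⁻¹ z = ∞`, then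
everywhere by continuity). A Möbius map is open, which upgrades this to `‖M‖ < ‖N‖` on `𝔻`.
-/

open ComplexConjugate Filter Topology Metric

theorem forall_le_of_forall_ne_le {X α : Type*} [TopologicalSpace X] [TopologicalSpace α]
    [Preorder α] [OrderClosedTopology α] {f g : X → α} (hf : Continuous f) (hg : Continuous g)
    {U : Set X} (hU : IsOpen U) (x₀ : X) [(𝓝[≠] x₀).NeBot]
    (h : ∀ x ∈ U, x ≠ x₀ → f x ≤ g x) : ∀ x ∈ U, f x ≤ g x := fun _ hx =>
  closure_minimal (fun y hy => h y hy.1 hy.2) (isClosed_le hf hg)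
    ((dense_compl_singleton x₀).open_subset_closure_inter hU hx)

theorem ne_zero_and_norm_div_lt_one_of_norm_lt {𝕜 : Type*} [NormedDivisionRing 𝕜] {x y : 𝕜}
    (h : ‖x‖ < ‖y‖) : y ≠ 0 ∧ ‖x / y‖ < 1 := by
  have hy : 0 < ‖y‖ := (norm_nonneg x).trans_lt h
  exact ⟨norm_pos_iff.1 hy, by rwa [norm_div, div_lt_one hy]⟩

namespace Complex

section Mobius

variable {p q r s : ℂ}

theorem mobius_det_eq_zero_of_common_root {w : ℂ} (hf : p * w - q = 0) (hg : r * w + s = 0) :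
    p * s + q * r = 0 := by
  linear_combination p * hg - r * hf

theorem norm_sub_lt_norm_add_of_forall_le {U : Set ℂ} (hU : IsOpen U) (hdet : p * s + q * r ≠ 0)
    (hle : ∀ w ∈ U, ‖p * w - q‖ ≤ ‖r * w + s‖) {z : ℂ} (hz : z ∈ U) :
    ‖p * z - q‖ < ‖r * z + s‖ := by
  by_contra! hge
  have hf : p * z - q ≠ 0 := fun hf =>
    hdet (mobius_det_eq_zero_of_common_root hf (norm_le_zero_iff.1 (by simpa [hf] using hge)))
  set u₀ := (r * z + s) / (p * z - q)
  have hu₀f : u₀ * (p * z - q) = r * z + s := div_mul_cancel₀ _ hf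
  have hu₀ : u₀ ∈ closure (ball 0 1) := by
    rw [closure_ball 0 one_ne_zero, mem_closedBall_zero_iff, norm_div,
      div_le_one (norm_pos_iff.2 hf)]
    exact hge
  have hden : u₀ * p - r ≠ 0 := fun h => hdet (by linear_combination (p * z - q) * h - p * hu₀f)
  -- `k u` is the solution `w` of `r * w + s = u * (p * w - q)`
  set k : ℂ → ℂ := fun u => (u * q + s) / (u * p - r)
  have hk_spec : ∀ u, u * p - r ≠ 0 → r * k u + s = u * (p * k u - q) := fun u hu => by
    linear_combination -(div_mul_cancel₀ (u * q + s) hu)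
  have hk : ContinuousAt k u₀ := by fun_prop (disch := exact hden)
  have hku₀ : k u₀ = z := by
    rw [div_eq_iff hden]; linear_combination -hu₀f
  obtain ⟨u, hu, hkU, hu'⟩ := ((mem_closure_iff_frequently.1 hu₀).and_eventually
    ((hk.eventually (hku₀ ▸ hU.mem_nhds hz)).and
      ((by fun_prop : ContinuousAt (fun u => u * p - r) u₀).eventually_ne hden))).exists
  have hfk : p * k u - q ≠ 0 := fun h =>
    hdet (mobius_det_eq_zero_of_common_root h (by rw [hk_spec u hu', h, mul_zero]))
  have hle_k := hle _ hkU
  rw [hk_spec u hu', norm_mul] at hle_k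
  exact (mul_lt_of_lt_one_left (norm_pos_iff.2 hfk) (mem_ball_zero_iff.1 hu)).not_ge hle_k

end Mobius

section LinearFractional

variable {a b c d : ℂ}

theorem sub_mul_ne_zero_of_ne_div (hdet : a * d - b * c ≠ 0) {w : ℂ} (hw : w ≠ a / c) :
    a - c * w ≠ 0 := by
  intro h
  rcases eq_or_ne c 0 with hc | hc
  · exact hdet (by simp_all)
  · exact hw (by rw [eq_div_iff hc]; linear_combination -h)

theorem linFrac_apply_inverse (hdet : a * d - b * c ≠ 0) {w : ℂ} (hw : a - c * w ≠ 0) :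
    c * ((d * w - b) / (a - c * w)) + d ≠ 0 ∧
      (a * ((d * w - b) / (a - c * w)) + b) / (c * ((d * w - b) / (a - c * w)) + d) = w := by
  have hz' := div_mul_cancel₀ (d * w - b) hw
  have hden : c * ((d * w - b) / (a - c * w)) + d = (a * d - b * c) / (a - c * w) := by
    rw [eq_div_iff hw]; linear_combination c * hz'
  have hnum : a * ((d * w - b) / (a - c * w)) + b = (a * d - b * c) * w / (a - c * w) := by
    rw [eq_div_iff hw]; linear_combination a * hz'
  refine ⟨hden ▸ div_ne_zero hdet hw, ?_⟩
  rw [hnum, hden, div_div_div_cancel_right₀ hw, mul_div_cancel_left₀ _ hdet]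

theorem norm_numerator_le_norm_denominator_of_disjoint (hdet : a * d - b * c ≠ 0)
    (hden : ∀ α : ℂ, ‖α‖ < 1 → c * α + d ≠ 0)
    (hdisj : ¬ ∃ (α z : ℂ), ‖α‖ < 1 ∧ c * z + d ≠ 0 ∧
      ‖(a * z + b) / (c * z + d)‖ < 1 ∧
      conj ((a * α + b) / (c * α + d)) * z = 1)
    {w : ℂ} (hw : ‖w‖ < 1) (hw' : a - c * w ≠ 0) :
    ‖(conj a * d + conj c * c) * w - (conj a * b + conj c * a)‖ ≤
      ‖(-conj b * d - conj d * c) * w + (conj b * b + conj d * a)‖ := by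
  set M := (conj a * d + conj c * c) * w - (conj a * b + conj c * a)
  set N := (-conj b * d - conj d * c) * w + (conj b * b + conj d * a)
  by_contra! hlt
  have hM : M ≠ 0 := norm_pos_iff.1 ((norm_nonneg N).trans_lt hlt)
  set α := conj (N / M)
  have hα : ‖α‖ < 1 := by
    rwa [norm_conj, norm_div, div_lt_one (norm_pos_iff.2 hM)]
  obtain ⟨hz', hφz'⟩ := linFrac_apply_inverse hdet hw'
  refine hdisj ⟨α, _, hα, hz', hφz'.symm ▸ hw, ?_⟩
  have hσ₁ : conj a * N + conj b * M = conj (a * d - b * c) * (a - c * w) := by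
    simp only [M, N, map_sub, map_mul]; ring
  have hσ₂ : conj c * N + conj d * M = conj (a * d - b * c) * (d * w - b) := by
    simp only [M, N, map_sub, map_mul]; ring
  have hφα₁ : conj a * N + conj b * M = M * conj (a * α + b) := by
    simp only [α, map_add, map_mul, conj_conj]; field_simp
  have hφα₂ : conj c * N + conj d * M = M * conj (c * α + d) := by
    simp only [α, map_add, map_mul, conj_conj]; field_simp
  have hdwb : d * w - b ≠ 0 :=
    right_ne_zero_of_mul (hσ₂ ▸ hφα₂ ▸ mul_ne_zero hM ((map_ne_zero _).2 (hden α hα)))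
  rw [map_div₀, ← mul_div_mul_left _ _ hM, ← hφα₁, ← hφα₂, hσ₁, hσ₂,
    mul_div_mul_left _ _ ((map_ne_zero _).2 hdet), div_mul_div_comm, mul_comm,
    div_self (mul_ne_zero hdwb hw')]

end LinearFractional

end Complex

/-- If `φ(z) = (az+b)/(cz+d)` is a linear-fractional selfmap of the unit disk and the
set `1/conj(φ(𝔻))` does not meet `φ⁻¹(𝔻)`, then the linear-fractional map
`σ ∘ φ⁻¹` (with the displayed coefficients) maps the unit disk into itself. -/
theorem sigma_comp_phi_inv_selfmap_of_disjoint (a b c d : ℂ)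
    (hdet : a * d - b * c ≠ 0)
    (hself : ∀ z : ℂ, ‖z‖ < 1 →
      c * z + d ≠ 0 ∧ ‖(a * z + b) / (c * z + d)‖ < 1)
    (hdisj : ¬ ∃ (α z : ℂ), ‖α‖ < 1 ∧ c * z + d ≠ 0 ∧
      ‖(a * z + b) / (c * z + d)‖ < 1 ∧
      conj ((a * α + b) / (c * α + d)) * z = 1) :
    ∀ z : ℂ, ‖z‖ < 1 →
      (-conj b * d - conj d * c) * z + (conj b * b + conj d * a) ≠ 0 ∧
      ‖((conj a * d + conj c * c) * z - (conj a * b + conj c * a)) /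
        ((-conj b * d - conj d * c) * z + (conj b * b + conj d * a))‖ < 1 := by
  have hle : ∀ w ∈ ball (0 : ℂ) 1,
      ‖(conj a * d + conj c * c) * w - (conj a * b + conj c * a)‖ ≤
        ‖(-conj b * d - conj d * c) * w + (conj b * b + conj d * a)‖ :=
    forall_le_of_forall_ne_le (by fun_prop) (by fun_prop) isOpen_ball (a / c) fun w hw hne =>
      Complex.norm_numerator_le_norm_denominator_of_disjoint hdet (fun α hα => (hself α hα).1)
        hdisj (mem_ball_zero_iff.1 hw) (Complex.sub_mul_ne_zero_of_ne_div hdet hne)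
  have hdet_adj : (conj a * d + conj c * c) * (conj b * b + conj d * a) +
      (conj a * b + conj c * a) * (-conj b * d - conj d * c) ≠ 0 := by
    convert mul_ne_zero ((map_ne_zero conj).2 hdet) hdet using 1
    simp only [map_sub, map_mul]; ring
  intro z hz
  exact ne_zero_and_norm_div_lt_one_of_norm_lt
    (Complex.norm_sub_lt_norm_add_of_forall_le isOpen_ball hdet_adj hle (mem_ball_zero_iff.2 hz))
end

section
/- Let a, b, c, d ∈ ℂ with ad − bc ≠ 0 and let φ(z) = (az+b)/(cz+d) be a selfmap of 𝔻. Suppose φ is not an automorphism of 𝔻 (that is, φ(𝔻) ≠ 𝔻), that φ fixes a point ζ with |ζ| = 1 (cζ + d ≠ 0 and φ(ζ) = ζ), and that the derivative φ'(ζ) = (ad − bc)/(cζ + d)² equals a real number s with 0 < s < 1. Then the linear-fractional map φ∘σ⁻¹, given explicitly by Θ(z) = ((a·conj(d) + b·conj(b))·z + (a·conj(c) + b·conj(a))) / ((c·conj(d) + d·conj(b))·z + (c·conj(c) + d·conj(a))), fails to map 𝔻 into 𝔻: there exists z₀ ∈ 𝔻 such that either (c·conj(d) + d·conj(b))·z₀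 + (c·conj(c) + d·conj(a)) = 0 or |Θ(z₀)| ≥ 1. -/
open ComplexConjugate Complex

/-!
Write `q = cζ + d`. The fixed point and the derivative at `ζ` force `a = cζ + s q` and
`b = ζ((1 - s) q - cζ)`. Then `Θ = φ ∘ σ⁻¹ = (Az + B)/(Cz + D)` also fixes `ζ`, with
`Θ'(ζ) = s²` because `det Θ = |ad - bc|²`, and its second fixed point `η = -B/(Cζ)` lies in `𝔻`
as soon as `|B| < |C|`. Here `|C|² - |B|²` is a positive multiple of `X = |d|² - |c|² - s|q|²`:
`X ≥ 0` because `φ` maps the boundary point `-ζ` into the closed disk, and `X ≠ 0` because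
otherwise `φ` is a rotated disk automorphism, hence onto `𝔻`.

A Möbius map with an interior fixed point `η` and a boundary fixed point `ζ` of multiplier
`s² < 1` is conjugate, by `M w = (wζ - η)/(w - 1)`, to the dilation `w ↦ w/s²`, while `M`
pulls `𝔻` back to a half-plane containing `0`; no expanding dilation preserves such a half-plane.
-/

theorem normSq_mul_sub_sub_normSq_sub_one {ζ η w : ℂ} {t : ℝ} (hζ : ζ * conj ζ = 1)
    (hw : w * (1 - ζ * conj η) = t) :
    normSq (w * ζ - η) - normSq (w - 1) = normSq η - 1 + 2 * t := by
  have hw' : conj w * (1 - conj ζ * η) = t := by simpa using congrArg conj hw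
  apply ofReal_injective
  push_cast
  simp only [← mul_conj, map_sub, map_mul, map_one]
  linear_combination (w * conj w) * hζ + hw + hw'

theorem exists_norm_sub_lt_and_dilate_norm_sub_eq {ζ η : ℂ} {k : ℝ} (hζ : ‖ζ‖ = 1)
    (hη : ‖η‖ < 1) (hk : 1 < k) :
    ∃ w : ℂ, ‖w * ζ - η‖ < ‖w - 1‖ ∧ ‖k * w * ζ - η‖ = ‖k * w - 1‖ := by
  have hζζ : ζ * conj ζ = 1 := by rw [mul_conj', hζ]; norm_num
  have hβ : 1 - ζ * conj η ≠ 0 := by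
    rw [sub_ne_zero]
    intro h
    have := congrArg norm h
    rw [norm_mul, hζ, norm_conj, one_mul, norm_one] at this
    linarith
  obtain ⟨g, hg⟩ : ∃ g : ℝ, normSq η - 1 + 2 * g = 0 := ⟨(1 - normSq η) / 2, by ring⟩
  have hg0 : 0 < g := by
    rw [normSq_eq_norm_sq] at hg
    nlinarith [norm_nonneg η]
  set w : ℂ := (g / k : ℝ) / (1 - ζ * conj η)
  have hwβ : w * (1 - ζ * conj η) = (g / k : ℝ) := div_mul_cancel₀ _ hβ
  have hkwβ : k * w * (1 - ζ * conj η) = g := by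
    rw [mul_assoc, hwβ, ← ofReal_mul, mul_div_cancel₀ _ (by positivity)]
  have hin := normSq_mul_sub_sub_normSq_sub_one hζζ hwβ
  have hon := normSq_mul_sub_sub_normSq_sub_one hζζ hkwβ
  have hgk : g / k < g := div_lt_self hg0 hk
  refine ⟨w, ?_, ?_⟩
  · rw [← sq_lt_sq₀ (norm_nonneg _) (norm_nonneg _), ← normSq_eq_norm_sq, ← normSq_eq_norm_sq]
    linarith
  · rw [← sq_eq_sq₀ (norm_nonneg _) (norm_nonneg _), ← normSq_eq_norm_sq, ← normSq_eq_norm_sq]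
    linarith

theorem exists_norm_div_ge_one_of_fixed_points {A B C D ζ η r : ℂ} {k : ℝ}
    (hζ : ‖ζ‖ = 1) (hη : ‖η‖ < 1) (hk : 1 < k)
    (hζfix : A * ζ + B = ζ * (k * r)) (hζden : C * ζ + D = k * r)
    (hηfix : A * η + B = η * r) (hηden : C * η + D = r) :
    ∃ z₀ : ℂ, ‖z₀‖ < 1 ∧ (C * z₀ + D = 0 ∨ 1 ≤ ‖(A * z₀ + B) / (C * z₀ + D)‖) := by
  obtain ⟨w, hw, hkw⟩ := exists_norm_sub_lt_and_dilate_norm_sub_eq hζ hη hk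
  have hw1 : w - 1 ≠ 0 := norm_pos_iff.mp ((norm_nonneg _).trans_lt hw)
  refine ⟨(w * ζ - η) / (w - 1), by rwa [norm_div, div_lt_one (norm_pos_iff.mpr hw1)], ?_⟩
  -- `z ↦ (A * z + B) / (C * z + D)` acts on `w` as multiplication by `k`
  set z₀ := (w * ζ - η) / (w - 1)
  have hz₀ : z₀ * (w - 1) = w * ζ - η := div_mul_cancel₀ _ hw1
  have hden : (C * z₀ + D) * (w - 1) = r * (k * w - 1) := by
    linear_combination C * hz₀ + w * hζden - hηden
  have hnum : (A * z₀ + B) * (w - 1) = r * (k * w * ζ - η) := by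
    linear_combination A * hz₀ + w * hζfix - hηfix
  rcases eq_or_ne (C * z₀ + D) 0 with h | h
  · exact Or.inl h
  have hrkw := mul_ne_zero h hw1
  rw [hden] at hrkw
  obtain ⟨hr, hkw1⟩ := mul_ne_zero_iff.mp hrkw
  have hval : (A * z₀ + B) / (C * z₀ + D) = (k * w * ζ - η) / (k * w - 1) := by
    rw [div_eq_div_iff h hkw1]
    apply mul_left_cancel₀ (mul_ne_zero hw1 hr)
    linear_combination (k * w - 1) * r * hnum - r * (k * w * ζ - η) * hden
  rw [hval, norm_div, hkw, div_self (norm_ne_zero_iff.mpr hkw1)]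
  exact Or.inr le_rfl

theorem lft_second_fixed_point {A B C D ζ : ℂ} (hC : C ≠ 0) (hζ : ζ ≠ 0)
    (hfix : A * ζ + B = ζ * (C * ζ + D)) :
    (C * (-B / (C * ζ)) + D) * (C * ζ + D) = A * D - B * C ∧
      A * (-B / (C * ζ)) + B = -B / (C * ζ) * (C * (-B / (C * ζ)) + D) := by
  constructor
  · field_simp
    linear_combination -D * hfix
  · field_simp
    linear_combination -B * hfix

theorem exists_norm_div_ge_one_of_boundary_fixed_point {A B C D ζ : ℂ} {t : ℝ}
    (hζ : ‖ζ‖ = 1) (hden : C * ζ + D ≠ 0) (hfix : A * ζ + B = ζ * (C * ζ + D))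
    (hderiv : A * D - B * C = t * (C * ζ + D) ^ 2) (ht0 : 0 < t) (ht1 : t < 1)
    (hBC : ‖B‖ < ‖C‖) :
    ∃ z₀ : ℂ, ‖z₀‖ < 1 ∧ (C * z₀ + D = 0 ∨ 1 ≤ ‖(A * z₀ + B) / (C * z₀ + D)‖) := by
  have hC : C ≠ 0 := norm_pos_iff.mp ((norm_nonneg B).trans_lt hBC)
  have hζ0 : ζ ≠ 0 := norm_ne_zero_iff.mp (by rw [hζ]; exact one_ne_zero)
  obtain ⟨hηden, hηfix⟩ := lft_second_fixed_point hC hζ0 hfix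
  have hη : ‖-B / (C * ζ)‖ < 1 := by
    rwa [norm_div, norm_neg, norm_mul, hζ, mul_one, div_lt_one (norm_pos_iff.mpr hC)]
  have hr : C * (-B / (C * ζ)) + D = t * (C * ζ + D) :=
    mul_right_cancel₀ hden (by rw [hηden, hderiv]; ring)
  have ht : (t : ℂ) ≠ 0 := ofReal_ne_zero.mpr ht0.ne'
  refine exists_norm_div_ge_one_of_fixed_points (k := t⁻¹) hζ hη
    ((one_lt_inv₀ ht0).mpr ht1) ?_ ?_ (by rw [hηfix, hr]) hr
  · rw [hfix]; push_cast; field_simp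
  · push_cast; field_simp

theorem normSq_conj_mul_add_sub_normSq_mul_add (α β v : ℂ) :
    normSq (conj β * v + conj α) - normSq (α * v + β) =
      (normSq α - normSq β) * (1 - normSq v) := by
  apply ofReal_injective
  push_cast
  simp only [← mul_conj, map_add, map_mul, conj_conj]
  ring

theorem norm_mul_add_lt_norm_conj_mul_add {α β v : ℂ} (hαβ : ‖β‖ < ‖α‖) (hv : ‖v‖ < 1) :
    ‖α * v + β‖ < ‖conj β * v + conj α‖ := by
  have h := normSq_conj_mul_add_sub_normSq_mul_add α β v
  simp only [normSq_eq_norm_sq] at h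
  have hpos : 0 < (‖α‖ ^ 2 - ‖β‖ ^ 2) * (1 - ‖v‖ ^ 2) := by
    apply mul_pos <;> nlinarith [norm_nonneg β, norm_nonneg v]
  exact (pow_lt_pow_iff_left₀ (norm_nonneg _) (norm_nonneg _) two_ne_zero).mp (by linarith)

theorem exists_eq_div_of_eq_mul_conj {a b c d μ u : ℂ} (hμ : ‖μ‖ = 1) (hcd : ‖c‖ < ‖d‖)
    (ha : a = μ * conj d) (hb : b = μ * conj c) (hu : ‖u‖ < 1) :
    ∃ z : ℂ, ‖z‖ < 1 ∧ u = (a * z + b) / (c * z + d) := by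
  have hμμ : conj μ * μ = 1 := by rw [conj_mul', hμ]; norm_num
  obtain ⟨v, hv⟩ : ∃ v, v = conj μ * u := ⟨_, rfl⟩
  have hv1 : ‖v‖ < 1 := by rwa [hv, norm_mul, norm_conj, hμ, one_mul]
  have hlt := norm_mul_add_lt_norm_conj_mul_add (α := d) (β := -conj c)
    (by rwa [norm_neg, norm_conj]) hv1
  simp only [map_neg, conj_conj] at hlt
  have hden : -c * v + conj d ≠ 0 := norm_pos_iff.mp ((norm_nonneg _).trans_lt hlt)
  refine ⟨(d * v + -conj c) / (-c * v + conj d),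
    by rwa [norm_div, div_lt_one (norm_pos_iff.mpr hden)], ?_⟩
  set z := (d * v + -conj c) / (-c * v + conj d)
  have hE : d * conj d - c * conj c ≠ 0 := by
    rw [mul_conj', mul_conj', sub_ne_zero]
    norm_cast
    exact (pow_lt_pow_left₀ hcd (norm_nonneg _) two_ne_zero).ne'
  have hz : z * (-c * v + conj d) = d * v + -conj c := div_mul_cancel₀ _ hden
  have h1 : (c * z + d) * (-c * v + conj d) = d * conj d - c * conj c := by
    linear_combination c * hz
  have h2 : (a * z + b) * (-c * v + conj d) = u * (d * conj d - c * conj c) := by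
    rw [ha, hb]
    linear_combination μ * conj d * hz + (d * conj d - c * conj c) * (u * hμμ + μ * hv)
  rw [eq_div_iff (left_ne_zero_of_mul (h1 ▸ hE))]
  apply mul_left_cancel₀ hden
  linear_combination u * h1 - h2

theorem norm_mul_add_le_of_mapsTo_ball {a b c d w : ℂ}
    (hself : ∀ z : ℂ, ‖z‖ < 1 → c * z + d ≠ 0 ∧ ‖(a * z + b) / (c * z + d)‖ < 1)
    (hw : ‖w‖ ≤ 1) : ‖a * w + b‖ ≤ ‖c * w + d‖ := by
  have hclosed : IsClosed {z : ℂ | ‖a * z + b‖ ≤ ‖c * z + d‖} :=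
    isClosed_le (by fun_prop) (by fun_prop)
  have hball : Metric.ball (0 : ℂ) 1 ⊆ {z : ℂ | ‖a * z + b‖ ≤ ‖c * z + d‖} := by
    intro z hz
    rw [mem_ball_zero_iff] at hz
    obtain ⟨hden, hlt⟩ := hself z hz
    rw [norm_div, div_lt_one (norm_pos_iff.mpr hden)] at hlt
    exact hlt.le
  have := hclosed.closure_subset_iff.mpr hball
  rw [closure_ball 0 one_ne_zero] at this
  exact this (mem_closedBall_zero_iff.mpr hw)

theorem lft_det_mul_adjoint_inv (a b c d : ℂ) :
    (a * conj d + b * conj b) * (c * conj c + d * conj a) -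
        (a * conj c + b * conj a) * (c * conj d + d * conj b) =
      (a * d - b * c) * conj (a * d - b * c) := by
  simp only [map_sub, map_mul]
  ring

def autDefect (c d ζ : ℂ) (s : ℝ) : ℝ := normSq d - normSq c - s * normSq (c * ζ + d)

section NormalForm

variable {a b c d ζ : ℂ} {s : ℝ}

theorem eq_of_fixed_point_of_deriv (hden : c * ζ + d ≠ 0) (hfix : a * ζ + b = ζ * (c * ζ + d))
    (hderiv : a * d - b * c = s * (c * ζ + d) ^ 2) :
    a = c * ζ + s * (c * ζ + d) ∧ b = ζ * ((1 - s) * (c * ζ + d) - c * ζ) := by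
  have ha : a = c * ζ + s * (c * ζ + d) :=
    mul_right_cancel₀ hden (by linear_combination c * hfix + hderiv)
  exact ⟨ha, by linear_combination hfix - ζ * ha⟩

theorem normSq_sub_sub_normSq_sub_eq_autDefect (hζ : ‖ζ‖ = 1) (ha : a = c * ζ + s * (c * ζ + d))
    (hb : b = ζ * ((1 - s) * (c * ζ + d) - c * ζ)) :
    normSq (d - c * ζ) - normSq (b - a * ζ) = 4 * s * autDefect c d ζ s := by
  have hζ0 : ζ ≠ 0 := norm_ne_zero_iff.mp (by rw [hζ]; exact one_ne_zero)
  apply ofReal_injective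
  push_cast [autDefect]
  subst ha hb
  simp only [← mul_conj, map_add, map_mul, map_sub, map_one, conj_ofReal]
  rw [← inv_eq_conj hζ]
  field_simp
  ring

theorem mul_conj_sub_mul_conj_eq_autDefect (hζ : ‖ζ‖ = 1) (ha : a = c * ζ + s * (c * ζ + d))
    (hb : b = ζ * ((1 - s) * (c * ζ + d) - c * ζ)) :
    b * conj d - a * conj c = ζ * autDefect c d ζ s := by
  have hζ0 : ζ ≠ 0 := norm_ne_zero_iff.mp (by rw [hζ]; exact one_ne_zero)
  push_cast [autDefect]
  subst ha hb
  simp only [← mul_conj, map_add, map_mul]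
  rw [← inv_eq_conj hζ]
  field_simp
  ring

theorem adjoint_inv_den_eq_normSq (hζ : ‖ζ‖ = 1) (ha : a = c * ζ + s * (c * ζ + d))
    (hb : b = ζ * ((1 - s) * (c * ζ + d) - c * ζ)) :
    (c * conj d + d * conj b) * ζ + (c * conj c + d * conj a) = normSq (c * ζ + d) := by
  have hζ0 : ζ ≠ 0 := norm_ne_zero_iff.mp (by rw [hζ]; exact one_ne_zero)
  subst ha hb
  simp only [← mul_conj, map_add, map_mul, map_sub, map_one, conj_ofReal]
  rw [← inv_eq_conj hζ]
  field_simp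
  ring

theorem adjoint_inv_fixed (hζ : ‖ζ‖ = 1) (ha : a = c * ζ + s * (c * ζ + d))
    (hb : b = ζ * ((1 - s) * (c * ζ + d) - c * ζ)) :
    (a * conj d + b * conj b) * ζ + (a * conj c + b * conj a) =
      ζ * ((c * conj d + d * conj b) * ζ + (c * conj c + d * conj a)) := by
  have hζ0 : ζ ≠ 0 := norm_ne_zero_iff.mp (by rw [hζ]; exact one_ne_zero)
  subst ha hb
  simp only [map_add, map_mul, map_sub, map_one, conj_ofReal]
  rw [← inv_eq_conj hζ]
  field_simp
  ring

theorem normSq_sub_normSq_eq_autDefect (hζ : ‖ζ‖ = 1) (ha : a = c * ζ + s * (c * ζ + d))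
    (hb : b = ζ * ((1 - s) * (c * ζ + d) - c * ζ)) :
    normSq (c * conj d + d * conj b) - normSq (a * conj c + b * conj a) =
      (1 - s) ^ 2 * (1 + s) * normSq (c * ζ + d) * autDefect c d ζ s := by
  have hζ0 : ζ ≠ 0 := norm_ne_zero_iff.mp (by rw [hζ]; exact one_ne_zero)
  apply ofReal_injective
  push_cast [autDefect]
  subst ha hb
  simp only [← mul_conj, map_add, map_mul, map_sub, map_one, conj_conj, conj_ofReal]
  rw [← inv_eq_conj hζ]
  field_simp
  ring

theorem autDefect_nonneg
    (hself : ∀ z : ℂ, ‖z‖ < 1 → c * z + d ≠ 0 ∧ ‖(a * z + b) / (c * z + d)‖ < 1)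
    (hζ : ‖ζ‖ = 1) (ha : a = c * ζ + s * (c * ζ + d))
    (hb : b = ζ * ((1 - s) * (c * ζ + d) - c * ζ)) (hs : 0 < s) :
    0 ≤ autDefect c d ζ s := by
  have hle : ‖b - a * ζ‖ ≤ ‖d - c * ζ‖ := by
    convert norm_mul_add_le_of_mapsTo_ball hself (w := -ζ) (by rw [norm_neg, hζ]) using 2 <;> ring
  have h := normSq_sub_sub_normSq_sub_eq_autDefect hζ ha hb
  rw [normSq_eq_norm_sq, normSq_eq_norm_sq] at h
  have : 0 ≤ 4 * s * autDefect c d ζ s := by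
    rw [← h, sub_nonneg]; gcongr
  exact nonneg_of_mul_nonneg_right this (by positivity)

theorem autDefect_ne_zero
    (hself : ∀ z : ℂ, ‖z‖ < 1 → c * z + d ≠ 0 ∧ ‖(a * z + b) / (c * z + d)‖ < 1)
    (hnotauto : {u : ℂ | ∃ z : ℂ, ‖z‖ < 1 ∧ u = (a * z + b) / (c * z + d)} ≠ {u : ℂ | ‖u‖ < 1})
    (hζ : ‖ζ‖ = 1) (hden : c * ζ + d ≠ 0) (ha : a = c * ζ + s * (c * ζ + d))
    (hb : b = ζ * ((1 - s) * (c * ζ + d) - c * ζ)) (hdet : a * d - b * c = s * (c * ζ + d) ^ 2)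
    (hs : 0 < s) :
    autDefect c d ζ s ≠ 0 := by
  intro hX
  have hbd := mul_conj_sub_mul_conj_eq_autDefect hζ ha hb
  rw [hX, ofReal_zero, mul_zero, sub_eq_zero] at hbd
  set E := normSq d - normSq c
  have hE : E = s * normSq (c * ζ + d) := by unfold autDefect at hX; linarith
  have hEpos : 0 < E := hE ▸ mul_pos hs (normSq_pos.mpr hden)
  have hEc : (E : ℂ) = d * conj d - c * conj c := by rw [ofReal_sub, mul_conj, mul_conj]
  -- `φ z = μ * (conj d * z + conj c) / (c * z + d)` is a rotated disk automorphism
  set μ : ℂ := (a * d - b * c) / E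
  have hμ : ‖μ‖ = 1 := by
    rw [norm_div, hdet, norm_mul, norm_pow, norm_real, norm_real, Real.norm_of_nonneg hs.le,
      Real.norm_of_nonneg hEpos.le, ← normSq_eq_norm_sq, hE, div_self (hE ▸ hEpos.ne')]
  have ha' : a = μ * conj d := by
    rw [div_mul_eq_mul_div, eq_div_iff (ofReal_ne_zero.mpr hEpos.ne'), hEc]
    linear_combination c * hbd
  have hb' : b = μ * conj c := by
    rw [div_mul_eq_mul_div, eq_div_iff (ofReal_ne_zero.mpr hEpos.ne'), hEc]
    linear_combination d * hbd
  have hcd : ‖c‖ < ‖d‖ := by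
    rw [← sq_lt_sq₀ (norm_nonneg _) (norm_nonneg _), ← normSq_eq_norm_sq, ← normSq_eq_norm_sq]
    linarith
  apply hnotauto
  ext u
  refine ⟨?_, fun hu => exists_eq_div_of_eq_mul_conj hμ hcd ha' hb' hu⟩
  rintro ⟨z, hz, rfl⟩
  exact (hself z hz).2

end NormalForm

theorem phi_comp_sigma_inv_not_selfmap_of_hyperbolic_general (a b c d ζ : ℂ) (s : ℝ)
    (hself : ∀ z : ℂ, ‖z‖ < 1 →
      c * z + d ≠ 0 ∧ ‖(a * z + b) / (c * z + d)‖ < 1)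
    (hnotauto : {u : ℂ | ∃ z : ℂ, ‖z‖ < 1 ∧ u = (a * z + b) / (c * z + d)}
      ≠ {u : ℂ | ‖u‖ < 1})
    (hζ : ‖ζ‖ = 1) (hζden : c * ζ + d ≠ 0)
    (hfix : (a * ζ + b) / (c * ζ + d) = ζ)
    (hs0 : 0 < s) (hs1 : s < 1)
    (hderiv : (a * d - b * c) / (c * ζ + d) ^ 2 = (s : ℂ)) :
    ∃ z₀ : ℂ, ‖z₀‖ < 1 ∧
      ((c * conj d + d * conj b) * z₀ + (c * conj c + d * conj a) = 0 ∨
        1 ≤ ‖(((a * conj d + b * conj b) * z₀ + (a * conj c + b * conj a)) /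
          ((c * conj d + d * conj b) * z₀ + (c * conj c + d * conj a)))‖) := by
  have hdet : a * d - b * c = s * (c * ζ + d) ^ 2 := (div_eq_iff (pow_ne_zero 2 hζden)).mp hderiv
  obtain ⟨ha, hb⟩ := eq_of_fixed_point_of_deriv hζden ((div_eq_iff hζden).mp hfix) hdet
  have hX : 0 < autDefect c d ζ s := (autDefect_nonneg hself hζ ha hb hs0).lt_of_ne'
    (autDefect_ne_zero hself hnotauto hζ hζden ha hb hdet hs0)
  have hq : 0 < normSq (c * ζ + d) := normSq_pos.mpr hζden
  have hden := adjoint_inv_den_eq_normSq hζ ha hb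
  refine exists_norm_div_ge_one_of_boundary_fixed_point (t := s ^ 2) hζ
    (hden ▸ ofReal_ne_zero.mpr hq.ne') (adjoint_inv_fixed hζ ha hb) ?_ (by positivity)
    (by nlinarith) ?_
  · rw [lft_det_mul_adjoint_inv, hden, mul_conj, hdet, normSq_mul, normSq_ofReal, map_pow]
    push_cast
    ring
  · have hpos : 0 < (1 - s) ^ 2 * (1 + s) * normSq (c * ζ + d) * autDefect c d ζ s := by
      have : 0 < 1 - s := by linarith
      positivity
    rw [← sq_lt_sq₀ (norm_nonneg _) (norm_nonneg _), ← normSq_eq_norm_sq, ← normSq_eq_norm_sq]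
    linarith [normSq_sub_normSq_eq_autDefect hζ ha hb]

/-- If `φ(z) = (az+b)/(cz+d)` is a nonautomorphic linear-fractional selfmap of the unit
disk of hyperbolic type (fixed point `ζ` on the unit circle with `φ'(ζ) = s ∈ (0,1)`),
then the linear-fractional map `φ ∘ σ⁻¹` (with the displayed coefficients) fails to map
the unit disk into itself. -/
theorem phi_comp_sigma_inv_not_selfmap_of_hyperbolic (a b c d ζ : ℂ) (s : ℝ)
    (hdet : a * d - b * c ≠ 0)
    (hself : ∀ z : ℂ, ‖z‖ < 1 →
      c * z + d ≠ 0 ∧ ‖(a * z + b) / (c * z + d)‖ < 1)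
    (hnotauto : {u : ℂ | ∃ z : ℂ, ‖z‖ < 1 ∧ u = (a * z + b) / (c * z + d)}
      ≠ {u : ℂ | ‖u‖ < 1})
    (hζ : ‖ζ‖ = 1) (hζden : c * ζ + d ≠ 0)
    (hfix : (a * ζ + b) / (c * ζ + d) = ζ)
    (hs0 : 0 < s) (hs1 : s < 1)
    (hderiv : (a * d - b * c) / (c * ζ + d) ^ 2 = (s : ℂ)) :
    ∃ z₀ : ℂ, ‖z₀‖ < 1 ∧
      ((c * conj d + d * conj b) * z₀ + (c * conj c + d * conj a) = 0 ∨
        1 ≤ ‖(((a * conj d + b * conj b) * z₀ + (a * conj c + b * conj a)) /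
          ((c * conj d + d * conj b) * z₀ + (c * conj c + d * conj a)))‖) :=
  phi_comp_sigma_inv_not_selfmap_of_hyperbolic_general a b c d ζ s hself hnotauto hζ hζden hfix hs0
    hs1 hderiv
end

section
/- For every t ∈ ℂ with Re(t) ≥ 0, the image φ_t(𝔻) = {φ_t(z) : z ∈ 𝔻} equals 𝔻 if and only if Re(t) = 0; that is, φ_t is an automorphism of 𝔻 precisely when t is purely imaginary. -/
/-- The parabolic-type linear-fractional map `φ_t(z) = ((2-t)z + t)/(-tz + 2 + t)`. -/
noncomputable def phiPara (t z : ℂ) : ℂ := ((2 - t) * z + t) / (-t * z + 2 + t)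

/-!
Under the Cayley transform `C w = (1 + w) / (1 - w)`, which maps `𝔻` onto the right half-plane
and has `Re (C w) = (1 - |w|²) / |1 - w|²`, the map `φ_t` becomes the translation by `t`.
Hence every `w ∈ φ_t(𝔻)` satisfies `Re t · |1 - w|² < 1 - |w|²`, so for `Re t > 0` the point
`(Re t - 1) / (Re t + 1) = C⁻¹ (Re t)` of `𝔻` is missed; for `Re t = 0`, `φ_{-t}` inverts `φ_t`.
-/

open Complex

theorem normSq_phiPara_den_sub_normSq_num (t z : ℂ) :
    normSq (-t * z + 2 + t) - normSq ((2 - t) * z + t) =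
      4 * (1 - normSq z) + 4 * t.re * normSq (1 - z) := by
  simp only [normSq_apply, add_re, add_im, mul_re, mul_im, sub_re, sub_im, neg_re, neg_im,
    re_ofNat, im_ofNat, one_re, one_im]
  ring

theorem normSq_lt_one_of_norm_lt_one {z : ℂ} (hz : ‖z‖ < 1) : normSq z < 1 := by
  rw [normSq_eq_norm_sq]
  exact pow_lt_one₀ (norm_nonneg z) hz two_ne_zero

theorem phiPara_den_ne_zero {t z : ℂ} (ht : 0 ≤ t.re) (hz : ‖z‖ < 1) : -t * z + 2 + t ≠ 0 := by
  intro hD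
  have key := normSq_phiPara_den_sub_normSq_num t z
  rw [hD, show (2 - t) * z + t = -2 * (1 - z) by linear_combination hD, normSq_mul,
    show normSq (-2) = 4 by norm_num [normSq_apply], map_zero] at key
  have := normSq_lt_one_of_norm_lt_one hz
  nlinarith [mul_nonneg ht (normSq_nonneg (1 - z)), normSq_nonneg (1 - z)]

theorem re_mul_normSq_one_sub_phiPara_lt {t z : ℂ} (hD : -t * z + 2 + t ≠ 0) (hz : ‖z‖ < 1) :
    t.re * normSq (1 - phiPara t z) < 1 - normSq (phiPara t z) := by
  have key := normSq_phiPara_den_sub_normSq_num t z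
  have hz' := normSq_lt_one_of_norm_lt_one hz
  rw [phiPara]
  generalize hN : (2 - t) * z + t = N at key
  generalize hDdef : -t * z + 2 + t = D at hD key
  have hDpos : 0 < normSq D := normSq_pos.mpr hD
  have hsub : 1 - N / D = 2 * (1 - z) / D := by
    rw [eq_div_iff hD, sub_mul, div_mul_cancel₀ _ hD, ← hN, ← hDdef]; ring
  have hgap : 1 - normSq (N / D) - t.re * normSq (1 - N / D) =
      4 * (1 - normSq z) / normSq D := by
    rw [hsub, normSq_div, normSq_div, normSq_mul, show normSq 2 = 4 by norm_num [normSq_apply]]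
    field_simp
    linear_combination key
  have : 0 < 4 * (1 - normSq z) / normSq D := by apply div_pos <;> linarith
  linarith

theorem norm_phiPara_lt_one {t z : ℂ} (ht : 0 ≤ t.re) (hz : ‖z‖ < 1) : ‖phiPara t z‖ < 1 := by
  have hlt := re_mul_normSq_one_sub_phiPara_lt (phiPara_den_ne_zero ht hz) hz
  have hnonneg : 0 ≤ t.re * normSq (1 - phiPara t z) := mul_nonneg ht (normSq_nonneg _)
  have : ‖phiPara t z‖ ^ 2 < 1 := by rw [← normSq_eq_norm_sq]; linarith
  exact (pow_lt_one_iff_of_nonneg (norm_nonneg _) two_ne_zero).mp this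

@[simp] theorem phiPara_zero_left (z : ℂ) : phiPara 0 z = z := by
  simp [phiPara]

theorem phiPara_phiPara {s t z : ℂ} (hD : -t * z + 2 + t ≠ 0) :
    phiPara s (phiPara t z) = phiPara (s + t) z := by
  have hnum : (2 - s) * phiPara t z + s =
      2 * ((2 - (s + t)) * z + (s + t)) / (-t * z + 2 + t) := by
    rw [phiPara, eq_div_iff hD, add_mul, mul_assoc, div_mul_cancel₀ _ hD]; ring
  have hden : -s * phiPara t z + 2 + s = 2 * (-(s + t) * z + 2 + (s + t)) / (-t * z + 2 + t) := by
    rw [phiPara, eq_div_iff hD, add_mul, add_mul, mul_assoc, div_mul_cancel₀ _ hD]; ring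
  rw [phiPara, hnum, hden, div_div_div_cancel_right₀ hD, mul_div_mul_left _ _ two_ne_zero,
    phiPara]

theorem exists_norm_lt_one_one_sub_normSq_le {a : ℝ} (ha : 0 < a) :
    ∃ w : ℂ, ‖w‖ < 1 ∧ 1 - normSq w ≤ a * normSq (1 - w) := by
  refine ⟨((a - 1) / (a + 1) : ℝ), ?_, le_of_eq ?_⟩
  · rw [norm_real, Real.norm_eq_abs, abs_lt, lt_div_iff₀ (by linarith), div_lt_one (by linarith)]
    constructor <;> linarith
  · rw [← ofReal_one, ← ofReal_sub, normSq_ofReal, normSq_ofReal]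
    field_simp
    ring

/-- For `Re t ≥ 0`, the image `φ_t(𝔻)` equals the unit disk `𝔻` if and only if
`Re t = 0`; that is, `φ_t` is an automorphism of `𝔻` exactly when `t` is purely
imaginary. -/
theorem phiPara_image_eq_disk_iff (t : ℂ) (ht : 0 ≤ t.re) :
    {w : ℂ | ∃ z : ℂ, ‖z‖ < 1 ∧ w = phiPara t z} =
      {w : ℂ | ‖w‖ < 1} ↔ t.re = 0 := by
  constructor
  · intro h
    by_contra hne
    obtain ⟨w, hw, hw_le⟩ := exists_norm_lt_one_one_sub_normSq_le (ht.lt_of_ne' hne)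
    obtain ⟨z, hz, rfl⟩ : w ∈ {w : ℂ | ∃ z : ℂ, ‖z‖ < 1 ∧ w = phiPara t z} := h ▸ hw
    exact (re_mul_normSq_one_sub_phiPara_lt (phiPara_den_ne_zero ht hz) hz).not_ge hw_le
  · intro h0
    have hnt : 0 ≤ (-t).re := by simp [h0]
    ext w
    refine ⟨fun ⟨z, hz, hw⟩ => hw ▸ norm_phiPara_lt_one ht hz,
      fun hw => ⟨phiPara (-t) w, norm_phiPara_lt_one hnt hw, ?_⟩⟩
    rw [phiPara_phiPara (phiPara_den_ne_zero hnt hw), add_neg_cancel, phiPara_zero_left]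
end

section
/- Let t ∈ ℂ with t ≠ 0 and Re(t) ≥ 0. Then there exists z ∈ 𝔻 with −t·z + 2 + t ≠ 0 and φ_t(z) = 0 if and only if Re(t) < 1. -/
theorem Complex.norm_lt_norm_sub_ofReal_iff {a : ℝ} (ha : 0 < a) (t : ℂ) :
    ‖t‖ < ‖t - a‖ ↔ 2 * t.re < a := by
  rw [← sq_lt_sq₀ (norm_nonneg _) (norm_nonneg _), Complex.sq_norm, Complex.sq_norm,
    Complex.normSq_apply, Complex.normSq_apply]
  simp only [Complex.sub_re, Complex.sub_im, Complex.ofReal_re, Complex.ofReal_im, sub_zero]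
  constructor <;> intro h <;> nlinarith

theorem phiPara_eq_zero_iff {t z : ℂ} (hden : -t * z + 2 + t ≠ 0) :
    phiPara t z = 0 ↔ t = (t - 2) * z := by
  rw [phiPara, div_eq_zero_iff, or_iff_left hden]
  constructor <;> intro h <;> linear_combination h

/-- The only candidate zero of `φ_t` is `t / (t - 2)`, which lies in the disk iff `Re t < 1`. -/
theorem phiPara_vanishes_iff_general (t : ℂ) :
    (∃ z : ℂ, ‖z‖ < 1 ∧ -t * z + 2 + t ≠ 0 ∧ phiPara t z = 0) ↔ t.re < 1 := by
  have hnorm : ‖t‖ < ‖t - 2‖ ↔ t.re < 1 := by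
    have h := Complex.norm_lt_norm_sub_ofReal_iff two_pos t
    push_cast at h
    rw [h]
    constructor <;> intro <;> linarith
  rw [← hnorm]
  constructor
  · rintro ⟨z, hz, hden, hzero⟩
    have hfix : t = (t - 2) * z := (phiPara_eq_zero_iff hden).mp hzero
    have h2 : t - 2 ≠ 0 := fun h2 => by
      rw [h2, zero_mul] at hfix
      rw [hfix] at h2
      norm_num at h2
    calc ‖t‖ = ‖t - 2‖ * ‖z‖ := by rw [← norm_mul, ← hfix]
      _ < ‖t - 2‖ := mul_lt_of_lt_one_right (norm_pos_iff.mpr h2) hz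
  · intro hlt
    have h2 : t - 2 ≠ 0 := norm_pos_iff.mp ((norm_nonneg t).trans_lt hlt)
    have hden : -t * (t / (t - 2)) + 2 + t ≠ 0 := by
      rw [show -t * (t / (t - 2)) + 2 + t = -4 / (t - 2) by field_simp; ring]
      exact div_ne_zero (by norm_num) h2
    refine ⟨t / (t - 2), ?_, hden, (phiPara_eq_zero_iff hden).mpr (mul_div_cancel₀ t h2).symm⟩
    rwa [norm_div, div_lt_one (norm_pos_iff.mpr h2)]

/-- For `t ≠ 0` with `Re t ≥ 0`, the map `φ_t` vanishes at some point of the unit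
disk if and only if `Re t < 1`. -/
theorem phiPara_vanishes_iff (t : ℂ) (ht0 : t ≠ 0) (ht : 0 ≤ t.re) :
    (∃ z : ℂ, ‖z‖ < 1 ∧ -t * z + 2 + t ≠ 0 ∧ phiPara t z = 0) ↔ t.re < 1 :=
  phiPara_vanishes_iff_general t
end

section
/- Let a, c ∈ ℂ with a ≠ 0, |a| < 1, and c ≠ 0, and suppose ψ(z) = a·z/(1 − c·z) is a selfmap of 𝔻 (1 − c·z ≠ 0 and |ψ(z)| < 1 for all z ∈ 𝔻). Then the linear-fractional map σ₁∘ψ⁻¹, where σ₁(z) = conj(a)·z + conj(c) is the adjoint of ψ and ψ⁻¹(z) = z/(a + c·z), given explicitly by Ψ(z) = ((conj(a) + conj(c)·c)·z + a·conj(c))/(c·z + a), fails to map 𝔻 into 𝔻: there exists z₀ ∈ 𝔻 such that either c·z₀ + a = 0 or |Ψ(z₀)| ≥ 1. -/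
/-!
Writing `Ψ(z) = conj a · z/(cz + a) + conj c`, the reverse triangle inequality gives
`‖Ψ z‖ ≥ ‖a‖‖z‖/‖cz + a‖ - ‖c‖`. Along the segment `z = -s·a/c` towards the pole `-a/c`
this lower bound equals `s‖a‖/(‖c‖(1 - s)) - ‖c‖`, which exceeds `1` before `z` leaves the
disk (`s < ‖c‖/‖a‖`) or reaches the pole (`s < 1`), because `‖a‖ < 1 + ‖c‖`.
-/

open ComplexConjugate

theorem adjoint_comp_psi_inv_eq {a c z : ℂ} (h : c * z + a ≠ 0) :
    ((conj a + conj c * c) * z + a * conj c) / (c * z + a) =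
      conj a * (z / (c * z + a)) + conj c := by
  field_simp
  ring

theorem le_norm_adjoint_comp_psi_inv {a c z : ℂ} (h : c * z + a ≠ 0) :
    ‖a‖ * ‖z‖ / ‖c * z + a‖ - ‖c‖ ≤
      ‖((conj a + conj c * c) * z + a * conj c) / (c * z + a)‖ := by
  rw [adjoint_comp_psi_inv_eq h]
  calc ‖a‖ * ‖z‖ / ‖c * z + a‖ - ‖c‖ = ‖conj a * (z / (c * z + a))‖ - ‖conj c‖ := by
        simp [mul_div_assoc]
    _ ≤ _ := norm_sub_le_norm_add _ _

theorem exists_one_add_le_div_mul_one_sub {A C : ℝ} (hA : 0 < A) (hC : 0 < C)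
    (hAC : A < 1 + C) :
    ∃ s : ℝ, 0 < s ∧ s < 1 ∧ s * A < C ∧ 1 + C ≤ s * A / (C * (1 - s)) := by
  have hden : 0 < A + C + C ^ 2 := by positivity
  obtain ⟨s, hs₀, hs⟩ : ∃ s, C * (1 + C) / (A + C + C ^ 2) < s ∧ s < min 1 (C / A) := by
    refine exists_between (lt_min ?_ ?_)
    · rw [div_lt_one hden]; nlinarith
    · rw [div_lt_div_iff₀ hden hA]; nlinarith [mul_pos hC hC]
  rw [lt_min_iff, lt_div_iff₀ hA] at hs
  rw [div_lt_iff₀ hden] at hs₀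
  refine ⟨s, by nlinarith, hs.1, hs.2, ?_⟩
  rw [le_div_iff₀ (mul_pos hC (sub_pos.2 hs.1))]
  nlinarith

theorem adjoint_comp_psi_inv_not_selfmap_general (a c : ℂ)
    (ha0 : a ≠ 0) (ha : ‖a‖ < 1) (hc : c ≠ 0) :
    ∃ z₀ : ℂ, ‖z₀‖ < 1 ∧
      (c * z₀ + a = 0 ∨
        1 ≤ ‖((conj a + conj c * c) * z₀ + a * conj c) / (c * z₀ + a)‖) := by
  have hA := norm_pos_iff.2 ha0
  have hC := norm_pos_iff.2 hc
  obtain ⟨s, hs0, hs1, hsAC, hbound⟩ :=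
    exists_one_add_le_div_mul_one_sub hA hC (by linarith)
  have hden : c * (-s * a / c) + a = (1 - s : ℝ) * a := by
    push_cast
    field_simp
    ring
  have hden_ne : c * (-s * a / c) + a ≠ 0 := by
    rw [hden]
    exact mul_ne_zero (by exact_mod_cast (sub_pos.2 hs1).ne') ha0
  have hnorm_den : ‖c * (-s * a / c) + a‖ = (1 - s) * ‖a‖ := by
    rw [hden, norm_mul, Complex.norm_real, Real.norm_of_nonneg (by linarith)]
  have hnorm : ‖-(s : ℂ) * a / c‖ = s * ‖a‖ / ‖c‖ := by
    rw [norm_div, norm_mul, norm_neg, Complex.norm_real, Real.norm_of_nonneg hs0.le]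
  refine ⟨-s * a / c, by rwa [hnorm, div_lt_one hC], Or.inr ?_⟩
  calc (1 : ℝ) ≤ s * ‖a‖ / (‖c‖ * (1 - s)) - ‖c‖ := by linarith
    _ = ‖a‖ * ‖-(s : ℂ) * a / c‖ / ‖c * (-s * a / c) + a‖ - ‖c‖ := by
        rw [hnorm, hnorm_den]
        field_simp
    _ ≤ _ := le_norm_adjoint_comp_psi_inv hden_ne

/-- If `ψ(z) = az/(1-cz)` with `0 < |a| < 1` and `c ≠ 0` is a selfmap of the unit
disk, then `σ₁ ∘ ψ⁻¹` (where `σ₁(z) = conj(a)z + conj(c)` is the Cowen adjoint of `ψ`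
and `ψ⁻¹(z) = z/(a + cz)`), given by
`Ψ(z) = ((conj a + conj c · c)z + a·conj c)/(cz + a)`, fails to map the unit disk
into itself. -/
theorem adjoint_comp_psi_inv_not_selfmap (a c : ℂ)
    (ha0 : a ≠ 0) (ha : ‖a‖ < 1) (hc : c ≠ 0)
    (hself : ∀ z : ℂ, ‖z‖ < 1 →
      1 - c * z ≠ 0 ∧ ‖a * z / (1 - c * z)‖ < 1) :
    ∃ z₀ : ℂ, ‖z₀‖ < 1 ∧
      (c * z₀ + a = 0 ∨
        1 ≤ ‖((conj a + conj c * c) * z₀ + a * conj c) / (c * z₀ + a)‖) :=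
  adjoint_comp_psi_inv_not_selfmap_general a c ha0 ha hc
end

section
/- Let φ(z) = (az+b)/(cz+d), ad − bc ≠ 0, be a selfmap of 𝔻 that is not an automorphism of 𝔻 (φ(𝔻) ≠ 𝔻), has a fixed point w ∈ 𝔻 (φ(w) = w, |w| < 1), and has no fixed point on the unit circle (φ(ζ) ≠ ζ whenever |ζ| = 1 and cζ + d ≠ 0). Let τ(z) = (w − z)/(1 − conj(w)·z). Then the following are equivalent: (i) the linear-fractional map σ∘φ⁻¹, given explicitly by Ψ(z) = ((conj(a)·d + conj(c)·c)·z − (conj(a)·b + conj(c)·a)) / ((−conj(b)·d − conj(d)·c)·z + (conj(b)·b + conj(d)·a)), maps 𝔻 into 𝔻 (denominator nonzero and |Ψ(z)| < 1 for all z ∈ 𝔻); (ii) there exists α ∈ ℂ with 0 < |α| < 1 such that φ(z) = τ(α·τ(z)) for all z ∈ 𝔻. -/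
/-!
Conjugating by the involution `τ`, whose matrix `S = !![-1, w; -conj w, 1]` satisfies
`J Sᴴ J = S` and `adjugate S = -S` for `J = !![1, 0; 0, -1]`, turns the matrix `J Mᴴ J · adj M` of
`σ ∘ φ⁻¹` into a multiple of `S (J Mᴴ J · adj M) S`. So condition (i) holds for `φ` iff it holds for
`φ̃ = τ ∘ φ ∘ τ`, which fixes `0` and so has a matrix `!![a, 0; c, d]`. Every linear-fractional
selfmap `(pz + q)/(rz + s)` of the disk satisfies `|ps - qr| ≤ |s|² - |r|²`; for the `σ ∘ φ̃⁻¹` of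
such a matrix this reads `|a d|² ≤ |a d|² - |c d|²`, so (i) forces `c = 0`, and conversely for
`c = 0` it is a rotation. Finally `c = 0` says that `φ̃` is the dilation `z ↦ (a/d) z`, where
`a/d ≠ 0` because `ad ≠ 0`, and `|a/d| < 1` because `φ̃` maps the disk into itself but not onto it.
-/

open ComplexConjugate Matrix

theorem Complex.exists_norm_eq_one_mul_eq_norm (x : ℂ) :
    ∃ e : ℂ, ‖e‖ = 1 ∧ x * e = ‖x‖ := by
  refine ⟨Complex.exp (↑(-x.arg) * Complex.I), Complex.norm_exp_ofReal_mul_I _, ?_⟩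
  nth_rewrite 1 [← Complex.norm_mul_exp_arg_mul_I x]
  rw [mul_assoc, ← Complex.exp_add, Complex.ofReal_neg, neg_mul, add_neg_cancel, Complex.exp_zero,
    mul_one]

theorem Real.le_sub_of_forall_mul_lt_sub_sq_mul {A B C : ℝ}
    (h : ∀ t : ℝ, 0 < t → t < 1 → t * A < B - t ^ 2 * C) : A ≤ B - C := by
  have hlim : Filter.Tendsto (fun t : ℝ => t * A + t ^ 2 * C) (nhdsWithin 1 (Set.Iio 1))
      (nhds (A + C)) := by
    have hc : Continuous fun t : ℝ => t * A + t ^ 2 * C := by fun_prop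
    simpa using (hc.tendsto 1).mono_left nhdsWithin_le_nhds
  have hev : ∀ᶠ t in nhdsWithin (1 : ℝ) (Set.Iio 1), t * A + t ^ 2 * C ≤ B := by
    filter_upwards [Ioo_mem_nhdsLT one_pos] with t ht
    linarith [h t ht.1 ht.2]
  linarith [le_of_tendsto hlim hev]

theorem Complex.norm_sq_sub_sq_of_mul_conj_mul_eq_norm {r s e : ℂ} {t : ℝ} (hs : s ≠ 0)
    (he : r * conj s * e = ‖r * conj s‖) (hts : t ^ 2 * ‖r‖ ^ 2 ≤ ‖s‖ ^ 2) :
    ‖s ^ 2 - (r * (t * e)) ^ 2‖ = ‖s‖ ^ 2 - t ^ 2 * ‖r‖ ^ 2 := by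
  have hss : s * conj s = ((‖s‖ ^ 2 : ℝ) : ℂ) := by simp [Complex.mul_conj']
  rw [norm_mul, Complex.norm_conj] at he
  have hreal : (s ^ 2 - (r * (t * e)) ^ 2) * conj s ^ 2 =
      ((‖s‖ ^ 2 * (‖s‖ ^ 2 - t ^ 2 * ‖r‖ ^ 2) : ℝ) : ℂ) := by
    push_cast at hss he ⊢
    linear_combination (s * conj s + ‖s‖ ^ 2) * hss - t ^ 2 * (r * conj s * e + ‖r‖ * ‖s‖) * he
  have := congrArg norm hreal
  rw [norm_mul, norm_pow, Complex.norm_conj, Complex.norm_real,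
    Real.norm_of_nonneg (mul_nonneg (by positivity) (sub_nonneg.2 hts))] at this
  exact mul_right_cancel₀ (pow_ne_zero 2 (norm_ne_zero_iff.2 hs)) (this.trans (mul_comm _ _))

namespace LinearFractional

section Field

variable {K : Type*} [Field K]

def num (M : Matrix (Fin 2) (Fin 2) K) (z : K) : K := M 0 0 * z + M 0 1

def denom (M : Matrix (Fin 2) (Fin 2) K) (z : K) : K := M 1 0 * z + M 1 1

def mobius (M : Matrix (Fin 2) (Fin 2) K) (z : K) : K := num M z / denom M z

variable {M N : Matrix (Fin 2) (Fin 2) K} {z : K}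

theorem num_mul (hz : denom N z ≠ 0) :
    num (M * N) z = num M (mobius N z) * denom N z := by
  simp only [num, denom, mobius] at hz ⊢
  simp only [mul_apply, Fin.sum_univ_two]
  field_simp
  ring

theorem denom_mul (hz : denom N z ≠ 0) :
    denom (M * N) z = denom M (mobius N z) * denom N z := by
  simp only [num, denom, mobius] at hz ⊢
  simp only [mul_apply, Fin.sum_univ_two]
  field_simp
  ring

theorem mobius_mul (hz : denom N z ≠ 0) : mobius (M * N) z = mobius M (mobius N z) := by
  rw [mobius, num_mul hz, denom_mul hz]
  exact mul_div_mul_right _ _ hz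

theorem num_smul (k : K) : num (k • M) z = k * num M z := by
  simp only [num, Matrix.smul_apply, smul_eq_mul]; ring

theorem denom_smul (k : K) : denom (k • M) z = k * denom M z := by
  simp only [denom, Matrix.smul_apply, smul_eq_mul]; ring

theorem mobius_smul {k : K} (hk : k ≠ 0) : mobius (k • M) z = mobius M z := by
  rw [mobius, num_smul, denom_smul, mul_div_mul_left _ _ hk, mobius]

theorem mobius_one : mobius (1 : Matrix (Fin 2) (Fin 2) K) z = z := by
  simp [mobius, num, denom]

theorem mobius_sub_mobius {z₁ z₂ : K} (h₁ : denom M z₁ ≠ 0) (h₂ : denom M z₂ ≠ 0) :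
    mobius M z₁ - mobius M z₂ = M.det * (z₁ - z₂) / (denom M z₁ * denom M z₂) := by
  rw [mobius, mobius, div_sub_div _ _ h₁ h₂, det_fin_two]
  simp only [num, denom]
  ring

end Field

def SelfMapsDisk (M : Matrix (Fin 2) (Fin 2) ℂ) : Prop :=
  ∀ z : ℂ, ‖z‖ < 1 → denom M z ≠ 0 ∧ ‖mobius M z‖ < 1

variable {M N : Matrix (Fin 2) (Fin 2) ℂ} {w z : ℂ}

theorem SelfMapsDisk.mul (hM : SelfMapsDisk M) (hN : SelfMapsDisk N) :
    SelfMapsDisk (M * N) := by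
  intro z hz
  obtain ⟨hNz, hNz'⟩ := hN z hz
  obtain ⟨hMz, hMz'⟩ := hM _ hNz'
  exact ⟨denom_mul hNz ▸ mul_ne_zero hMz hNz, mobius_mul hNz ▸ hMz'⟩

theorem selfMapsDisk_smul_iff {k : ℂ} (hk : k ≠ 0) :
    SelfMapsDisk (k • M) ↔ SelfMapsDisk M := by
  simp only [SelfMapsDisk, denom_smul, mobius_smul hk, mul_ne_zero_iff, ne_eq, hk,
    not_false_eq_true, true_and]

def diskSwap (w : ℂ) : Matrix (Fin 2) (Fin 2) ℂ := !![-1, w; -conj w, 1]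

theorem mobius_diskSwap (w z : ℂ) : mobius (diskSwap w) z = (w - z) / (1 - conj w * z) := by
  simp only [mobius, num, denom, diskSwap, of_apply, cons_val', cons_val_zero, cons_val_one,
    empty_val', cons_val_fin_one]
  ring_nf

theorem diskSwap_mul_self (w : ℂ) : diskSwap w * diskSwap w = (1 - conj w * w) • 1 := by
  ext i j
  fin_cases i <;> fin_cases j <;> simp [diskSwap, mul_apply, Fin.sum_univ_two] <;> ring

theorem one_sub_conj_mul_self_ne_zero (hw : ‖w‖ < 1) : 1 - conj w * w ≠ 0 := by
  rw [Complex.conj_mul', sub_ne_zero]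
  norm_cast
  nlinarith [norm_nonneg w]

theorem norm_one_sub_conj_mul_sq_sub_norm_sub_sq (w z : ℂ) :
    ‖1 - conj w * z‖ ^ 2 - ‖w - z‖ ^ 2 = (1 - ‖w‖ ^ 2) * (1 - ‖z‖ ^ 2) := by
  simp only [Complex.sq_norm, Complex.normSq_apply, Complex.sub_re, Complex.sub_im, Complex.mul_re,
    Complex.mul_im, Complex.conj_re, Complex.conj_im, Complex.one_re, Complex.one_im]
  ring

theorem selfMapsDisk_diskSwap (hw : ‖w‖ < 1) : SelfMapsDisk (diskSwap w) := by
  intro z hz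
  have hlt : ‖w - z‖ < ‖1 - conj w * z‖ := by
    refine lt_of_pow_lt_pow_left₀ 2 (norm_nonneg _) ?_
    have := norm_one_sub_conj_mul_sq_sub_norm_sub_sq w z
    nlinarith [mul_pos (by nlinarith [norm_nonneg w] : 0 < 1 - ‖w‖ ^ 2)
      (by nlinarith [norm_nonneg z] : 0 < 1 - ‖z‖ ^ 2)]
  have hne : 1 - conj w * z ≠ 0 := norm_pos_iff.1 ((norm_nonneg _).trans_lt hlt)
  refine ⟨?_, ?_⟩
  · convert hne using 1
    simp [denom, diskSwap]
    ring
  · rwa [mobius_diskSwap, norm_div, div_lt_one (norm_pos_iff.2 hne)]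

theorem mobius_diskSwap_mobius_diskSwap (hw : ‖w‖ < 1) (hz : ‖z‖ < 1) :
    mobius (diskSwap w) (mobius (diskSwap w) z) = z := by
  rw [← mobius_mul ((selfMapsDisk_diskSwap hw z hz).1), diskSwap_mul_self,
    mobius_smul (one_sub_conj_mul_self_ne_zero hw), mobius_one]

theorem mobius_diskSwap_conj (hw : ‖w‖ < 1) (hM : SelfMapsDisk M) (hz : ‖z‖ < 1) :
    mobius (diskSwap w * M * diskSwap w) z =
      mobius (diskSwap w) (mobius M (mobius (diskSwap w) z)) := by
  obtain ⟨hden, hSz⟩ := selfMapsDisk_diskSwap hw z hz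
  rw [mobius_mul hden, mobius_mul (hM _ hSz).1]

theorem selfMapsDisk_diskSwap_conj_iff (hw : ‖w‖ < 1) :
    SelfMapsDisk (diskSwap w * M * diskSwap w) ↔ SelfMapsDisk M := by
  have hS := selfMapsDisk_diskSwap hw
  refine ⟨fun h => ?_, fun h => (hS.mul h).mul hS⟩
  have hk := one_sub_conj_mul_self_ne_zero hw
  have hM : diskSwap w * (diskSwap w * M * diskSwap w) * diskSwap w =
      (1 - conj w * w) ^ 2 • M := by
    rw [show diskSwap w * (diskSwap w * M * diskSwap w) * diskSwap w =
        diskSwap w * diskSwap w * M * (diskSwap w * diskSwap w) by simp only [mul_assoc],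
      diskSwap_mul_self, smul_mul_assoc, one_mul, mul_smul_comm, mul_one, smul_smul, sq]
  rw [← selfMapsDisk_smul_iff (pow_ne_zero 2 hk), ← hM]
  exact (hS.mul h).mul hS

/-- `cowenAdjoint !![a, b; c, d] = !![conj a, -conj c; -conj b, conj d]` is the matrix of Cowen's
adjoint `σ`, and `adjugate M` is a matrix of `φ⁻¹`, so `adjointCompInv M` is one of `σ ∘ φ⁻¹`. -/
def cowenAdjoint (M : Matrix (Fin 2) (Fin 2) ℂ) : Matrix (Fin 2) (Fin 2) ℂ :=
  !![1, 0; 0, -1] * Mᴴ * !![1, 0; 0, -1]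

def adjointCompInv (M : Matrix (Fin 2) (Fin 2) ℂ) : Matrix (Fin 2) (Fin 2) ℂ :=
  cowenAdjoint M * adjugate M

theorem cowenAdjoint_mul (M N : Matrix (Fin 2) (Fin 2) ℂ) :
    cowenAdjoint (M * N) = cowenAdjoint N * cowenAdjoint M := by
  have hJ : !![(1 : ℂ), 0; 0, -1] * !![1, 0; 0, -1] = 1 := by
    simp [Matrix.one_fin_two]
  simp only [cowenAdjoint, conjTranspose_mul, mul_assoc]
  rw [← mul_assoc !![(1 : ℂ), 0; 0, -1] !![1, 0; 0, -1], hJ, one_mul]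

theorem cowenAdjoint_diskSwap (w : ℂ) : cowenAdjoint (diskSwap w) = diskSwap w := by
  ext i j
  fin_cases i <;> fin_cases j <;>
    simp [cowenAdjoint, diskSwap, mul_apply, vecMul, dotProduct, Fin.sum_univ_two]

theorem adjugate_diskSwap (w : ℂ) : adjugate (diskSwap w) = -diskSwap w := by
  simp [adjugate_fin_two, diskSwap]

theorem adjointCompInv_diskSwap_conj (w : ℂ) (M : Matrix (Fin 2) (Fin 2) ℂ) :
    adjointCompInv (diskSwap w * M * diskSwap w) =
      (1 - conj w * w) • (diskSwap w * adjointCompInv M * diskSwap w) := by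
  simp only [adjointCompInv, cowenAdjoint_mul, cowenAdjoint_diskSwap, adjugate_mul_distrib,
    adjugate_diskSwap, neg_mul, mul_neg, neg_neg, mul_assoc]
  rw [← mul_assoc (diskSwap w) (diskSwap w), diskSwap_mul_self]
  simp only [smul_mul_assoc, mul_smul_comm, one_mul]

theorem adjointCompInv_fin_two (a b c d : ℂ) :
    adjointCompInv !![a, b; c, d] =
      !![conj a * d + conj c * c, -(conj a * b + conj c * a);
        -conj b * d - conj d * c, conj b * b + conj d * a] := by
  ext i j
  fin_cases i <;> fin_cases j <;>
    simp [adjointCompInv, cowenAdjoint, adjugate_fin_two, mul_apply, vecMul, dotProduct,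
      Fin.sum_univ_two] <;> ring

theorem det_adjointCompInv (M : Matrix (Fin 2) (Fin 2) ℂ) :
    (adjointCompInv M).det = conj M.det * M.det := by
  rw [adjointCompInv, cowenAdjoint, det_mul, det_mul, det_mul, det_conjTranspose, det_adjugate]
  simp [det_fin_two]

/-- With `r = M 1 0` and `s = M 1 1`, evaluating at `±t e`, where `e` makes `r e` a positive
multiple of `s`, gives `‖mobius M (t e) - mobius M (-t e)‖ = 2t ‖det M‖ / (‖s‖² - t²‖r‖²)`,
which has to stay below `2`. -/
theorem norm_det_le_of_selfMapsDisk (hM : SelfMapsDisk M) :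
    ‖M.det‖ ≤ ‖M 1 1‖ ^ 2 - ‖M 1 0‖ ^ 2 := by
  set r := M 1 0
  set s := M 1 1
  have hs : s ≠ 0 := by simpa [denom] using (hM 0 (by simp)).1
  have hrs : ‖r‖ ≤ ‖s‖ := by
    by_contra! h
    have hr : r ≠ 0 := norm_pos_iff.1 ((norm_nonneg s).trans_lt h)
    refine (hM (-s / r) ?_).1 ?_
    · rwa [norm_div, norm_neg, div_lt_one (norm_pos_iff.2 hr)]
    · change r * (-s / r) + s = 0
      field_simp
      ring
  obtain ⟨e, he, hxe⟩ := Complex.exists_norm_eq_one_mul_eq_norm (r * conj s)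
  refine Real.le_sub_of_forall_mul_lt_sub_sq_mul fun t ht₀ ht₁ => ?_
  have hz : ∀ z : ℂ, z = t * e ∨ z = -(t * e) → ‖z‖ < 1 := by
    rintro z (rfl | rfl) <;> simpa [he, abs_of_pos ht₀] using ht₁
  obtain ⟨hd₁, hM₁⟩ := hM _ (hz _ (.inl rfl))
  obtain ⟨hd₂, hM₂⟩ := hM _ (hz _ (.inr rfl))
  have hpos : 0 < ‖s‖ ^ 2 - t ^ 2 * ‖r‖ ^ 2 := by
    have ht : t ^ 2 < 1 := by nlinarith
    nlinarith [mul_le_mul_of_nonneg_left (pow_le_pow_left₀ (norm_nonneg r) hrs 2) (sq_nonneg t),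
      mul_lt_mul_of_pos_right ht (pow_pos (norm_pos_iff.2 hs) 2)]
  have hprod : ‖denom M (t * e) * denom M (-(t * e))‖ = ‖s‖ ^ 2 - t ^ 2 * ‖r‖ ^ 2 := by
    rw [show denom M (t * e) * denom M (-(t * e)) = s ^ 2 - (r * (t * e)) ^ 2 by
      simp only [denom, r, s]; ring]
    exact Complex.norm_sq_sub_sq_of_mul_conj_mul_eq_norm hs hxe (sub_nonneg.1 hpos.le)
  have hlt : ‖mobius M (t * e) - mobius M (-(t * e))‖ < 2 :=
    (norm_sub_le _ _).trans_lt (by linarith)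
  rw [mobius_sub_mobius hd₁ hd₂, norm_div, hprod, div_lt_iff₀ hpos, norm_mul,
    show (t * e - -(t * e) : ℂ) = ((2 * t : ℝ) : ℂ) * e by push_cast; ring, norm_mul, he,
    Complex.norm_real, Real.norm_of_nonneg (by positivity)] at hlt
  linarith

theorem selfMapsDisk_adjointCompInv_iff_of_lowerTriangular (h01 : M 0 1 = 0) (hdet : M.det ≠ 0) :
    SelfMapsDisk (adjointCompInv M) ↔ M 1 0 = 0 := by
  have hM : M = !![M 0 0, 0; M 1 0, M 1 1] := h01 ▸ eta_fin_two M
  rw [det_fin_two, h01, zero_mul, sub_zero] at hdet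
  obtain ⟨ha, hd⟩ := mul_ne_zero_iff.1 hdet
  constructor
  · intro h
    have hle := norm_det_le_of_selfMapsDisk h
    rw [det_adjointCompInv, hM, adjointCompInv_fin_two, det_fin_two_of] at hle
    simp only [of_apply, cons_val', cons_val_zero, cons_val_one, empty_val', cons_val_fin_one,
      map_zero, zero_mul, mul_zero, sub_zero, zero_add, neg_zero, zero_sub, norm_mul, norm_neg,
      Complex.norm_conj, mul_pow] at hle
    have : ‖M 1 1‖ ^ 2 * ‖M 1 0‖ ^ 2 ≤ 0 := by nlinarith
    simpa using nonpos_of_mul_nonpos_right this (by positivity)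
  · intro h10 z hz
    rw [hM, h10, adjointCompInv_fin_two]
    have hne : conj (M 1 1) * M 0 0 ≠ 0 := by simp [ha, hd]
    simp only [mobius, num, denom, of_apply, cons_val', cons_val_zero, cons_val_one, empty_val',
      cons_val_fin_one, map_zero, zero_mul, mul_zero, add_zero, neg_zero, sub_zero, zero_add]
    refine ⟨hne, ?_⟩
    rwa [norm_div, norm_mul, norm_mul, norm_mul, Complex.norm_conj, Complex.norm_conj,
      mul_comm ‖M 0 0‖, mul_div_cancel_left₀ _ (by simpa using hne)]

theorem mobius_eqOn_dilation_iff {α : ℂ} (h01 : M 0 1 = 0) (h11 : M 1 1 ≠ 0) (hα : α ≠ 0) :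
    (∀ y : ℂ, ‖y‖ < 1 → mobius M y = α * y) ↔ M 1 0 = 0 ∧ M 0 0 = α * M 1 1 := by
  constructor
  · intro h
    have key : ∀ y : ℂ, ‖y‖ < 1 → y ≠ 0 → M 0 0 * y = α * y * (M 1 0 * y + M 1 1) := by
      intro y hy hy0
      have hden : M 1 0 * y + M 1 1 ≠ 0 := fun h0 => by
        have := h y hy
        simp [mobius, num, denom, h0, hα, hy0] at this
      have := h y hy
      rw [mobius, num, denom, h01, add_zero, div_eq_iff hden] at this
      exact this
    have h₁ := key (1 / 2) (by norm_num) (by norm_num)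
    have h₂ := key (-(1 / 2)) (by norm_num) (by norm_num)
    have h10 : M 1 0 = 0 := by
      have : α * M 1 0 = 0 := by linear_combination -2 * h₁ - 2 * h₂
      exact (mul_eq_zero.1 this).resolve_left hα
    refine ⟨h10, ?_⟩
    rw [h10] at h₁
    linear_combination 2 * h₁
  · rintro ⟨h10, h00⟩ y -
    rw [mobius, num, denom, h01, h10, h00, add_zero, zero_mul, zero_add, mul_right_comm,
      mul_div_cancel_right₀ _ h11]

theorem norm_le_one_of_forall_norm_mul_lt_one {α : ℂ} (h : ∀ y : ℂ, ‖y‖ < 1 → ‖α * y‖ < 1) :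
    ‖α‖ ≤ 1 := by
  by_contra! hα
  have hα0 : α ≠ 0 := norm_pos_iff.1 (one_pos.trans hα)
  have := h α⁻¹ (by rw [norm_inv]; exact inv_lt_one_of_one_lt₀ hα)
  simp [hα0] at this

theorem eqOn_diskSwap_conj_iff {α : ℂ} (hw : ‖w‖ < 1) (hM : SelfMapsDisk M) (hα : ‖α‖ ≤ 1) :
    (∀ z : ℂ, ‖z‖ < 1 →
      mobius M z = mobius (diskSwap w) (α * mobius (diskSwap w) z)) ↔
    ∀ y : ℂ, ‖y‖ < 1 → mobius (diskSwap w * M * diskSwap w) y = α * y := by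
  have hS := selfMapsDisk_diskSwap hw
  have hαy : ∀ y : ℂ, ‖y‖ < 1 → ‖α * y‖ < 1 := fun y hy => by
    rw [norm_mul]; nlinarith [norm_nonneg α, norm_nonneg y]
  constructor
  · intro h y hy
    rw [mobius_diskSwap_conj hw hM hy, h _ (hS y hy).2, mobius_diskSwap_mobius_diskSwap hw hy,
      mobius_diskSwap_mobius_diskSwap hw (hαy y hy)]
  · intro h z hz
    have hSz := (hS z hz).2
    rw [← h _ hSz, mobius_diskSwap_conj hw hM hSz, mobius_diskSwap_mobius_diskSwap hw hz,
      mobius_diskSwap_mobius_diskSwap hw (hM z hz).2]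

theorem image_eq_disk_of_eqOn_diskSwap_conj_rotation {f : ℂ → ℂ} {α : ℂ} (hw : ‖w‖ < 1)
    (hα : ‖α‖ = 1)
    (hf : ∀ z : ℂ, ‖z‖ < 1 → f z = mobius (diskSwap w) (α * mobius (diskSwap w) z)) :
    {u : ℂ | ∃ z : ℂ, ‖z‖ < 1 ∧ u = f z} = {u : ℂ | ‖u‖ < 1} := by
  have hS := selfMapsDisk_diskSwap hw
  have hrot : ∀ {β : ℂ}, ‖β‖ = 1 → ∀ y : ℂ, ‖y‖ < 1 → ‖β * y‖ < 1 := fun hβ y hy => by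
    rwa [norm_mul, hβ, one_mul]
  ext u
  constructor
  · rintro ⟨z, hz, rfl⟩
    rw [Set.mem_ofPred_eq, hf z hz]
    exact (hS _ (hrot hα _ (hS z hz).2)).2
  · intro hu
    have hv := hrot (by rwa [Complex.norm_conj]) _ (hS u hu).2
    refine ⟨mobius (diskSwap w) (conj α * mobius (diskSwap w) u), (hS _ hv).2, ?_⟩
    rw [hf _ (hS _ hv).2, mobius_diskSwap_mobius_diskSwap hw hv, ← mul_assoc, Complex.mul_conj',
      hα, Complex.ofReal_one, one_pow, one_mul, mobius_diskSwap_mobius_diskSwap hw hu]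

theorem diskSwap_conj_apply_zero_one_of_mobius_eq_self (hden : denom M w ≠ 0)
    (hfix : mobius M w = w) :
    (diskSwap w * M * diskSwap w) 0 1 = 0 := by
  rw [mobius, div_eq_iff hden] at hfix
  simp only [num, denom] at hfix
  simp only [diskSwap, mul_apply, Fin.sum_univ_two, of_apply, cons_val', cons_val_zero,
    cons_val_one, empty_val', cons_val_fin_one]
  linear_combination -hfix

theorem det_diskSwap_conj_ne_zero (hw : ‖w‖ < 1) (hM : M.det ≠ 0) :
    (diskSwap w * M * diskSwap w).det ≠ 0 := by
  have hS : (diskSwap w).det ≠ 0 := by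
    rw [det_fin_two, ← neg_ne_zero]
    convert one_sub_conj_mul_self_ne_zero hw using 1
    simp [diskSwap]
    ring
  simp [det_mul, hS, hM]

theorem selfMapsDisk_adjointCompInv_diskSwap_conj_iff (hw : ‖w‖ < 1) :
    SelfMapsDisk (adjointCompInv (diskSwap w * M * diskSwap w)) ↔
      SelfMapsDisk (adjointCompInv M) := by
  rw [adjointCompInv_diskSwap_conj, selfMapsDisk_smul_iff (one_sub_conj_mul_self_ne_zero hw),
    selfMapsDisk_diskSwap_conj_iff hw]

theorem selfMapsDisk_adjointCompInv_fin_two_iff (a b c d : ℂ) :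
    SelfMapsDisk (adjointCompInv !![a, b; c, d]) ↔
      ∀ z : ℂ, ‖z‖ < 1 →
        (-conj b * d - conj d * c) * z + (conj b * b + conj d * a) ≠ 0 ∧
        ‖((conj a * d + conj c * c) * z - (conj a * b + conj c * a)) /
          ((-conj b * d - conj d * c) * z + (conj b * b + conj d * a))‖ < 1 := by
  simp only [adjointCompInv_fin_two, SelfMapsDisk, mobius, num, denom, of_apply, cons_val',
    cons_val_zero, cons_val_one, empty_val', cons_val_fin_one, sub_eq_add_neg]

end LinearFractional

open LinearFractional

theorem coposinormal_iff_conjugate_dilation_general (a b c d w : ℂ)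
    (hdet : a * d - b * c ≠ 0)
    (hself : ∀ z : ℂ, ‖z‖ < 1 →
      c * z + d ≠ 0 ∧ ‖(a * z + b) / (c * z + d)‖ < 1)
    (hnotauto : {u : ℂ | ∃ z : ℂ, ‖z‖ < 1 ∧ u = (a * z + b) / (c * z + d)}
      ≠ {u : ℂ | ‖u‖ < 1})
    (hw : ‖w‖ < 1) (hfix : (a * w + b) / (c * w + d) = w) :
    (∀ z : ℂ, ‖z‖ < 1 →
      (-conj b * d - conj d * c) * z + (conj b * b + conj d * a) ≠ 0 ∧
      ‖((conj a * d + conj c * c) * z - (conj a * b + conj c * a)) /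
        ((-conj b * d - conj d * c) * z + (conj b * b + conj d * a))‖ < 1) ↔
    (∃ α : ℂ, 0 < ‖α‖ ∧ ‖α‖ < 1 ∧
      ∀ z : ℂ, ‖z‖ < 1 →
        (a * z + b) / (c * z + d) =
          (w - α * ((w - z) / (1 - conj w * z))) /
            (1 - conj w * (α * ((w - z) / (1 - conj w * z))))) := by
  set M : Matrix (Fin 2) (Fin 2) ℂ := !![a, b; c, d]
  have hM : SelfMapsDisk M := hself
  set M' := diskSwap w * M * diskSwap w
  have hM' : SelfMapsDisk M' := (selfMapsDisk_diskSwap_conj_iff hw).2 hM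
  have h01 : M' 0 1 = 0 := diskSwap_conj_apply_zero_one_of_mobius_eq_self (hself w hw).1 hfix
  have hdet' : M'.det ≠ 0 := det_diskSwap_conj_ne_zero hw (by rwa [det_fin_two_of])
  obtain ⟨h00, h11⟩ : M' 0 0 ≠ 0 ∧ M' 1 1 ≠ 0 := by
    simpa [det_fin_two, h01] using hdet'
  rw [← selfMapsDisk_adjointCompInv_fin_two_iff,
    ← selfMapsDisk_adjointCompInv_diskSwap_conj_iff hw,
    selfMapsDisk_adjointCompInv_iff_of_lowerTriangular h01 hdet']
  simp only [← mobius_diskSwap]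
  constructor
  · intro h10
    have hα0 : M' 0 0 / M' 1 1 ≠ 0 := div_ne_zero h00 h11
    have hdil := (mobius_eqOn_dilation_iff h01 h11 hα0).2 ⟨h10, (div_mul_cancel₀ _ h11).symm⟩
    have hα1 : ‖M' 0 0 / M' 1 1‖ ≤ 1 :=
      norm_le_one_of_forall_norm_mul_lt_one fun y hy => hdil y hy ▸ (hM' y hy).2
    have hφ := (eqOn_diskSwap_conj_iff hw hM hα1).2 hdil
    exact ⟨_, norm_pos_iff.2 hα0,
      hα1.lt_of_ne fun h => hnotauto (image_eq_disk_of_eqOn_diskSwap_conj_rotation hw h hφ), hφ⟩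
  · rintro ⟨α, hα0, hα1, hφ⟩
    exact ((mobius_eqOn_dilation_iff h01 h11 (norm_pos_iff.1 hα0)).1
      ((eqOn_diskSwap_conj_iff hw hM hα1.le).1 hφ)).1

/-- Let `φ(z) = (az+b)/(cz+d)` be a nonautomorphic linear-fractional selfmap of the
unit disk with a fixed point `w ∈ 𝔻` and no fixed point on the unit circle, and let
`τ(z) = (w-z)/(1 - conj(w)z)`.  Then `σ∘φ⁻¹` maps `𝔻` into `𝔻` if and only if
`φ = τ ∘ (α·) ∘ τ` for some `α` with `0 < |α| < 1`. -/
theorem coposinormal_iff_conjugate_dilation (a b c d w : ℂ)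
    (hdet : a * d - b * c ≠ 0)
    (hself : ∀ z : ℂ, ‖z‖ < 1 →
      c * z + d ≠ 0 ∧ ‖(a * z + b) / (c * z + d)‖ < 1)
    (hnotauto : {u : ℂ | ∃ z : ℂ, ‖z‖ < 1 ∧ u = (a * z + b) / (c * z + d)}
      ≠ {u : ℂ | ‖u‖ < 1})
    (hw : ‖w‖ < 1) (hfix : (a * w + b) / (c * w + d) = w)
    (hnobdry : ∀ ζ : ℂ, ‖ζ‖ = 1 → c * ζ + d ≠ 0 →
      (a * ζ + b) / (c * ζ + d) ≠ ζ) :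
    (∀ z : ℂ, ‖z‖ < 1 →
      (-conj b * d - conj d * c) * z + (conj b * b + conj d * a) ≠ 0 ∧
      ‖((conj a * d + conj c * c) * z - (conj a * b + conj c * a)) /
        ((-conj b * d - conj d * c) * z + (conj b * b + conj d * a))‖ < 1) ↔
    (∃ α : ℂ, 0 < ‖α‖ ∧ ‖α‖ < 1 ∧
      ∀ z : ℂ, ‖z‖ < 1 →
        (a * z + b) / (c * z + d) =
          (w - α * ((w - z) / (1 - conj w * z))) /
            (1 - conj w * (α * ((w - z) / (1 - conj w * z))))) :=
  coposinormal_iff_conjugate_dilation_general a b c d w hdet hself hnotauto hw hfix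
end

section
/- Let a, b, c, d ∈ ℂ with ad − bc ≠ 0 and let φ(z) = (az+b)/(cz+d) be a selfmap of 𝔻. Suppose φ has a fixed point w ∈ 𝔻 (φ(w) = w, |w| < 1) and also fixes a point ζ with |ζ| = 1 (cζ + d ≠ 0 and φ(ζ) = ζ). Then the linear-fractional map φ∘σ⁻¹, given explicitly by Θ(z) = ((a·conj(d) + b·conj(b))·z + (a·conj(c) + b·conj(a))) / ((c·conj(d) + d·conj(b))·z + (c·conj(c) + d·conj(a))), maps 𝔻 into 𝔻: for every z ∈ 𝔻 its denominator is nonzero and |Θ(z)| < 1. -/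
/-!
Solving the two fixed-point equations (Vieta) gives `a = d + c(ζ + w)` and `b = -cwζ`. Write
`Θ = (A z + B)/(C z + D)`, `Δ = ad - bc` and `t = |c|² (1 - |w|²) |cζ + d|² ≥ 0`. With these
coefficients one checks `B D̄ - A C̄ = t ζ`, `|D|² - |C|² = |Δ|² + t`, and always `AD - BC = |Δ|²`,
so that
  `(|Δ|² + t) (A z + B) = t ζ (C z + D) + |Δ|² (D̄ z + C̄)`.
Since `|C| < |D|`, the map `z ↦ (D̄ z + C̄)/(C z + D)` sends `𝔻` into `𝔻`; hence `Θ(z)` is a convex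
combination of the unimodular `ζ` and a point of `𝔻`, with positive weight `|Δ|²` on the latter.
-/

open ComplexConjugate Complex

theorem Complex.normSq_mul_add_sub_normSq_conj_mul_add (C D z : ℂ) :
    normSq (C * z + D) - normSq (conj D * z + conj C) =
      (normSq D - normSq C) * (1 - normSq z) := by
  simp only [normSq_apply, add_re, add_im, mul_re, mul_im, conj_re, conj_im]
  ring

theorem Complex.norm_conj_mul_add_conj_lt {C D z : ℂ} (hCD : normSq C < normSq D)
    (hz : ‖z‖ < 1) : ‖conj D * z + conj C‖ < ‖C * z + D‖ := by
  have hz' : normSq z < 1 := by rwa [← Complex.sq_norm, sq_lt_one_iff₀ (norm_nonneg z)]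
  have h := normSq_mul_add_sub_normSq_conj_mul_add C D z
  have : normSq (conj D * z + conj C) < normSq (C * z + D) := by
    nlinarith [mul_pos (sub_pos.2 hCD) (sub_pos.2 hz')]
  simpa only [← Complex.sq_norm, sq_lt_sq₀ (norm_nonneg _) (norm_nonneg _)] using this

theorem coeffs_eq_of_two_fixed_points {K : Type*} [Field K] {a b c d p q : K} (hpq : p ≠ q)
    (hp : a * p + b = p * (c * p + d)) (hq : a * q + b = q * (c * q + d)) :
    a = d + c * (p + q) ∧ b = -(c * p * q) := by
  have h : (p - q) * (a - d - c * (p + q)) = 0 := by linear_combination hp - hq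
  have ha : a = d + c * (p + q) := by
    linear_combination (mul_eq_zero.1 h).resolve_left (sub_ne_zero.2 hpq)
  exact ⟨ha, by linear_combination hp - p * ha⟩

theorem Complex.norm_lt_of_ofReal_mul_eq_add {X Y U ζ : ℂ} {s t : ℝ} (hs : 0 < s) (ht : 0 ≤ t)
    (hζ : ‖ζ‖ = 1) (hU : ‖U‖ < ‖Y‖) (h : ((s + t : ℝ) : ℂ) * X = t * ζ * Y + s * U) :
    ‖X‖ < ‖Y‖ := by
  have hst : 0 < s + t := by linarith
  refine lt_of_mul_lt_mul_left ?_ hst.le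
  calc (s + t) * ‖X‖ = ‖t * ζ * Y + s * U‖ := by
        rw [← h, norm_mul, norm_real, Real.norm_of_nonneg hst.le]
    _ ≤ t * ‖Y‖ + s * ‖U‖ := by
        refine (norm_add_le _ _).trans_eq ?_
        rw [norm_mul, norm_mul, norm_mul, norm_real, norm_real, Real.norm_of_nonneg ht,
          Real.norm_of_nonneg hs.le, hζ, mul_one]
    _ < (s + t) * ‖Y‖ := by nlinarith

theorem normSq_det_comp_sigma_inv (a b c d : ℂ) :
    (a * conj d + b * conj b) * (c * conj c + d * conj a) -
      (a * conj c + b * conj a) * (c * conj d + d * conj b) = normSq (a * d - b * c) := by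
  rw [← mul_conj]
  simp only [map_sub, map_mul]
  ring

section FixedPair

variable {a b c d w ζ : ℂ}

theorem cross_coeff_eq_of_fixed_pair (hζ : ‖ζ‖ = 1) (ha : a = d + c * (ζ + w))
    (hb : b = -(c * ζ * w)) :
    (a * conj c + b * conj a) * conj (c * conj c + d * conj a) -
      (a * conj d + b * conj b) * conj (c * conj d + d * conj b) =
      (normSq c * (1 - normSq w) * normSq (c * ζ + d) : ℝ) * ζ := by
  have hζ0 : ζ ≠ 0 := ne_zero_of_norm_ne_zero (hζ ▸ one_ne_zero)
  subst ha hb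
  push_cast
  simp only [← mul_conj, map_add, map_mul, map_neg, conj_conj]
  rw [← inv_eq_conj hζ]
  field_simp
  ring

theorem diag_coeff_eq_of_fixed_pair (hζ : ‖ζ‖ = 1) (ha : a = d + c * (ζ + w))
    (hb : b = -(c * ζ * w)) :
    (c * conj c + d * conj a) * conj (c * conj c + d * conj a) -
      (c * conj d + d * conj b) * conj (c * conj d + d * conj b) =
      (normSq (a * d - b * c) + normSq c * (1 - normSq w) * normSq (c * ζ + d) : ℝ) := by
  have hζ0 : ζ ≠ 0 := ne_zero_of_norm_ne_zero (hζ ▸ one_ne_zero)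
  subst ha hb
  push_cast
  simp only [← mul_conj, map_add, map_mul, map_neg, map_sub, conj_conj]
  rw [← inv_eq_conj hζ]
  field_simp
  ring

end FixedPair

/-- If `φ(z) = (az+b)/(cz+d)` is a linear-fractional selfmap of the unit disk with a
fixed point `w ∈ 𝔻` and a fixed point `ζ` on the unit circle, then the
linear-fractional map `φ∘σ⁻¹` (with the displayed coefficients) maps the unit disk
into itself. -/
theorem phi_comp_sigma_inv_selfmap_of_interior_boundary (a b c d w ζ : ℂ)
    (hdet : a * d - b * c ≠ 0)
    (hself : ∀ z : ℂ, ‖z‖ < 1 →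
      c * z + d ≠ 0 ∧ ‖(a * z + b) / (c * z + d)‖ < 1)
    (hw : ‖w‖ < 1) (hfixw : (a * w + b) / (c * w + d) = w)
    (hζ : ‖ζ‖ = 1) (hζden : c * ζ + d ≠ 0)
    (hfixζ : (a * ζ + b) / (c * ζ + d) = ζ) :
    ∀ z : ℂ, ‖z‖ < 1 →
      (c * conj d + d * conj b) * z + (c * conj c + d * conj a) ≠ 0 ∧
      ‖((a * conj d + b * conj b) * z + (a * conj c + b * conj a)) /
        ((c * conj d + d * conj b) * z + (c * conj c + d * conj a))‖ < 1 := by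
  intro z hz
  have hζw : ζ ≠ w := by rintro rfl; linarith
  obtain ⟨ha, hb⟩ := coeffs_eq_of_two_fixed_points hζw ((div_eq_iff hζden).1 hfixζ)
    ((div_eq_iff (hself w hw).1).1 hfixw)
  have hs : 0 < normSq (a * d - b * c) := normSq_pos.2 hdet
  have ht : 0 ≤ normSq c * (1 - normSq w) * normSq (c * ζ + d) := by
    have : normSq w < 1 := by rwa [← Complex.sq_norm, sq_lt_one_iff₀ (norm_nonneg w)]
    exact mul_nonneg (mul_nonneg (normSq_nonneg c) (sub_nonneg.2 this.le)) (normSq_nonneg _)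
  have hcross := cross_coeff_eq_of_fixed_pair hζ ha hb
  have hdiag := diag_coeff_eq_of_fixed_pair hζ ha hb
  have hdet' := normSq_det_comp_sigma_inv a b c d
  set A := a * conj d + b * conj b
  set B := a * conj c + b * conj a
  set C := c * conj d + d * conj b
  set D := c * conj c + d * conj a
  have hCD : normSq C < normSq D := by
    rw [mul_conj D, mul_conj C, ← ofReal_sub, ofReal_inj] at hdiag
    linarith
  have hden := norm_conj_mul_add_conj_lt hCD hz
  refine ⟨norm_pos_iff.1 ((norm_nonneg _).trans_lt hden), ?_⟩
  rw [norm_div, div_lt_one ((norm_nonneg _).trans_lt hden)]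
  refine norm_lt_of_ofReal_mul_eq_add hs ht hζ hden ?_
  push_cast at hcross hdiag hdet' ⊢
  linear_combination (-(A * z + B)) * hdiag + (C * z + D) * hcross +
    (conj D * z + conj C) * hdet'
end

section
/- Let φ(z) = (az+b)/(cz+d), ad − bc ≠ 0, be a selfmap of 𝔻 that is not the identity map, and suppose φ(0) = 0 and φ(η) = η for some η ∈ ℂ with |η| = 1 (and cη + d ≠ 0). Then there exists a real number s with 0 < s < 1 such that φ(z) = s·z/(1 − (1 − s)·conj(η)·z) for all z ∈ 𝔻. -/
/-!
Fixing `0` forces `b = 0`, and fixing `η` forces `a = cη + d`; with `s = a/d` this puts `φ`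
in the stated form with a complex `s`. Conjugating by the rotation `z ↦ ηz` turns the selfmap
condition into `‖s w‖ < ‖1 - (1 - s) w‖` on `𝔻`. Letting `w` tend to the boundary point
where `(1 - s) w = ‖1 - s‖` gives `‖1 - s‖ ≤ re (1 - s)`, so `s` is real and `s ≤ 1`.
The denominator vanishing at `1 / (1 - s)` rules out `s < 0`, `φ(η) = η ≠ 0` rules out
`s = 0`, and `φ ≠ id` rules out `s = 1`.
-/

open ComplexConjugate

namespace Complex

theorem norm_le_re_of_forall_norm_mul_le {β : ℂ}
    (h : ∀ w : ℂ, ‖w‖ < 1 → ‖(1 - β) * w‖ ≤ ‖1 - β * w‖) : ‖β‖ ≤ β.re := by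
  have hclosed : ∀ w : ℂ, ‖w‖ ≤ 1 → ‖(1 - β) * w‖ ≤ ‖1 - β * w‖ := by
    have hsub : closure (Metric.ball (0 : ℂ) 1) ⊆ {w | ‖(1 - β) * w‖ ≤ ‖1 - β * w‖} :=
      (isClosed_le (by fun_prop) (by fun_prop)).closure_subset_iff.mpr
        fun w hw => h w (mem_ball_zero_iff.mp hw)
    rw [closure_ball 0 one_ne_zero] at hsub
    exact fun w hw => hsub (mem_closedBall_zero_iff.mpr hw)
  rcases eq_or_ne β 0 with rfl | hβ
  · simp
  have hβn : (‖β‖ : ℂ) ≠ 0 := by simpa using hβ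
  -- at the unit vector `u` with `β * u = ‖β‖` the inequality reads `‖1 - β‖ ≤ |1 - ‖β‖|`
  set u : ℂ := conj β / ‖β‖
  have hu : ‖u‖ = 1 := by simp [u, hβ]
  have hβu : β * u = ‖β‖ := by
    rw [← mul_div_assoc, mul_conj', div_eq_iff hβn]; ring
  have hle := hclosed u hu.le
  rw [norm_mul, hu, mul_one, hβu, show (1 : ℂ) - ‖β‖ = ((1 - ‖β‖ : ℝ) : ℂ) by push_cast; rfl,
    norm_real, Real.norm_eq_abs] at hle
  have hsq := pow_le_pow_left₀ (norm_nonneg _) hle 2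
  rw [sq_abs, Complex.sq_norm, normSq_apply] at hsq
  simp only [sub_re, one_re, sub_im, one_im] at hsq
  have hβsq : ‖β‖ ^ 2 = β.re * β.re + β.im * β.im := by rw [Complex.sq_norm, normSq_apply]
  nlinarith

theorem exists_ofReal_eq_of_forall_norm_mul_lt {s : ℂ}
    (h : ∀ w : ℂ, ‖w‖ < 1 → ‖s * w‖ < ‖1 - (1 - s) * w‖) :
    ∃ t : ℝ, 0 ≤ t ∧ t ≤ 1 ∧ s = t := by
  have hre := norm_le_re_of_forall_norm_mul_le (β := 1 - s) fun w hw => by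
    simpa only [sub_sub_cancel] using (h w hw).le
  have him : (1 - s).im = 0 :=
    abs_re_eq_norm.mp (le_antisymm (abs_re_le_norm _) (hre.trans (le_abs_self _)))
  have hs : s = s.re := ext rfl (by simpa using him)
  refine ⟨s.re, ?_, by simpa using (norm_nonneg _).trans hre, hs⟩
  by_contra! hneg
  -- otherwise the denominator vanishes at `w = 1 / (1 - s) ∈ 𝔻`
  have hpos : 0 < 1 - s.re := by linarith
  have hw : ‖((1 - s.re)⁻¹ : ℝ)‖ < 1 := by
    rw [Real.norm_eq_abs, abs_of_pos (inv_pos.mpr hpos)]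
    exact inv_lt_one_of_one_lt₀ (by linarith)
  have hzero : 1 - (1 - s) * ((1 - s.re)⁻¹ : ℝ) = 0 := by
    have hne : (1 : ℂ) - s.re ≠ 0 := by exact_mod_cast hpos.ne'
    rw [hs, ofReal_re]; push_cast; field_simp [hne]; ring
  have := h _ (by rwa [norm_real])
  rw [hzero, norm_zero] at this
  exact (norm_nonneg _).not_gt this

theorem linearFractional_denom_eq {a c d η : ℂ} (hd : d ≠ 0) (hη : ‖η‖ = 1)
    (ha : a = c * η + d) (z : ℂ) : c * z + d = d * (1 - (1 - a / d) * conj η * z) := by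
  have hηη : η * conj η = 1 := by rw [mul_conj', hη]; norm_num
  have hda : d * (1 - a / d) = d - a := by field_simp
  linear_combination (-c * z) * hηη + (conj η * z) * hda - (conj η * z) * ha

theorem linearFractional_eq_of_fixing {a c d η : ℂ} (hd : d ≠ 0) (hη : ‖η‖ = 1)
    (ha : a = c * η + d) (z : ℂ) :
    a * z / (c * z + d) = a / d * z / (1 - (1 - a / d) * conj η * z) := by
  rw [linearFractional_denom_eq hd hη ha, ← mul_div_mul_left (a / d * z) _ hd, ← mul_assoc,
    mul_div_cancel₀ a hd]

theorem norm_mul_lt_of_forall_norm_lt_one {s η : ℂ} (hη : ‖η‖ = 1)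
    (h : ∀ z : ℂ, ‖z‖ < 1 →
      1 - (1 - s) * conj η * z ≠ 0 ∧ ‖s * z / (1 - (1 - s) * conj η * z)‖ < 1)
    (w : ℂ) (hw : ‖w‖ < 1) : ‖s * w‖ < ‖1 - (1 - s) * w‖ := by
  have hηw : ‖η * w‖ = ‖w‖ := by rw [norm_mul, hη, one_mul]
  obtain ⟨hne, hlt⟩ := h (η * w) (hηw ▸ hw)
  have hrot : (1 - s) * conj η * (η * w) = (1 - s) * w := by
    rw [show (1 - s) * conj η * (η * w) = (1 - s) * (conj η * η) * w by ring, conj_mul', hη]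
    norm_num
  rw [hrot] at hne hlt
  rwa [norm_div, div_lt_one (norm_pos_iff.mpr hne), mul_left_comm, norm_mul, hη, one_mul] at hlt

end Complex

open Complex

theorem normal_form_of_fixing_zero_and_boundary_general (a b c d η : ℂ)
    (hself : ∀ z : ℂ, ‖z‖ < 1 →
      c * z + d ≠ 0 ∧ ‖(a * z + b) / (c * z + d)‖ < 1)
    (hnotid : ¬ ∀ z : ℂ, ‖z‖ < 1 → (a * z + b) / (c * z + d) = z)
    (hfix0 : (a * 0 + b) / (c * 0 + d) = 0)
    (hη : ‖η‖ = 1) (hηden : c * η + d ≠ 0)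
    (hfixη : (a * η + b) / (c * η + d) = η) :
    ∃ s : ℝ, 0 < s ∧ s < 1 ∧
      ∀ z : ℂ, ‖z‖ < 1 →
        (a * z + b) / (c * z + d) = (s : ℂ) * z / (1 - (1 - (s : ℂ)) * conj η * z) := by
  have hd : d ≠ 0 := by simpa using (hself 0 (by simp)).1
  obtain rfl : b = 0 := by simpa [hd] using hfix0
  simp only [add_zero] at hself hnotid hfixη ⊢
  have hη0 : η ≠ 0 := norm_ne_zero_iff.mp (hη ▸ one_ne_zero)
  have ha0 : a ≠ 0 := by
    rintro rfl
    simp only [zero_mul, zero_div] at hfixη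
    exact hη0 hfixη.symm
  have ha : a = c * η + d :=
    mul_right_cancel₀ hη0 (by rw [div_eq_iff hηden] at hfixη; linear_combination hfixη)
  have hφ := linearFractional_eq_of_fixing hd hη ha
  obtain ⟨t, ht0, ht1, hst⟩ := exists_ofReal_eq_of_forall_norm_mul_lt <|
    norm_mul_lt_of_forall_norm_lt_one hη fun z hz => by
      obtain ⟨hne, hlt⟩ := hself z hz
      rw [linearFractional_denom_eq hd hη ha] at hne
      exact ⟨right_ne_zero_of_mul hne, hφ z ▸ hlt⟩
  rw [hst] at hφ
  refine ⟨t, ht0.lt_of_ne ?_, ht1.lt_of_ne ?_, fun z _ => hφ z⟩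
  · rintro rfl
    simp [div_eq_zero_iff, ha0, hd] at hst
  · rintro rfl
    exact hnotid fun z _ => by simp [hφ]

/-- If `φ(z) = (az+b)/(cz+d)` is a linear-fractional selfmap of the unit disk, not the
identity map, fixing `0` and a point `η` on the unit circle, then there is a real `s`
with `0 < s < 1` such that `φ(z) = sz/(1 - (1-s)·conj(η)·z)` on the unit disk. -/
theorem normal_form_of_fixing_zero_and_boundary (a b c d η : ℂ)
    (hdet : a * d - b * c ≠ 0)
    (hself : ∀ z : ℂ, ‖z‖ < 1 →
      c * z + d ≠ 0 ∧ ‖(a * z + b) / (c * z + d)‖ < 1)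
    (hnotid : ¬ ∀ z : ℂ, ‖z‖ < 1 → (a * z + b) / (c * z + d) = z)
    (hfix0 : (a * 0 + b) / (c * 0 + d) = 0)
    (hη : ‖η‖ = 1) (hηden : c * η + d ≠ 0)
    (hfixη : (a * η + b) / (c * η + d) = η) :
    ∃ s : ℝ, 0 < s ∧ s < 1 ∧
      ∀ z : ℂ, ‖z‖ < 1 →
        (a * z + b) / (c * z + d) = (s : ℂ) * z / (1 - (1 - (s : ℂ)) * conj η * z) :=
  normal_form_of_fixing_zero_and_boundary_general a b c d η hself hnotid hfix0 hη hηden hfixη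
end

section
/- Let a, b, c, d ∈ ℂ with ad − bc ≠ 0 and b ≠ 0, and let φ(z) = (az+b)/(cz+d) be a selfmap of 𝔻 (so in particular |b| < |d|, hence −conj(b)·z + conj(d) ≠ 0 for z ∈ 𝔻). Let σ(z) = (conj(a)·z − conj(c))/(−conj(b)·z + conj(d)) and assume σ maps 𝔻 into 𝔻. Suppose there exists a sequence (q_n)_{n≥0} of complex numbers with ∑_n |q_n|² < ∞ such that the function q(z) = ∑_{n=0}^∞ q_n·zⁿ (which converges for |z| < 1) satisfies q(σ(z)) = −conj(b)·z + conj(d) for all z ∈ 𝔻. Then |b| < |a|; in particular, the zero −b/a of φ lies in 𝔻. -/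
/-! Write `A, B, C, D` for the conjugates of `a, b, c, d`, so that `σ z = (A z - C) / (-B z + D)`,
and let `f w = ∑ qₙ wⁿ`. Since `B σ(z) + A = (A D - B C) / (-B z + D)`, the hypothesis says
`f w * (B w + A) = A D - B C` on the image of `σ`, which contains a neighbourhood of `σ 0`; by the
identity theorem this holds on the whole disk. So `B w + A` has no zero in the disk, whence
`‖b‖ ≤ ‖a‖`; and if `‖b‖ = ‖a‖`, the Taylor coefficients of `f = (A D - B C) / (B w + A)` all have
the same nonzero modulus, contradicting `∑ ‖qₙ‖² < ∞`. -/

open ComplexConjugate Filter Topology Metric FormalMultilinearSeries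

section PowerSeries

variable {𝕜 : Type*} [NontriviallyNormedField 𝕜] [CompleteSpace 𝕜]

theorem hasFPowerSeriesOnBall_tsum_mul_pow {c : ℕ → 𝕜}
    (hc : BddAbove (Set.range fun n => ‖c n‖)) :
    HasFPowerSeriesOnBall (fun w => ∑' n, c n * w ^ n) (ofScalars 𝕜 c) 0 1 := by
  obtain ⟨M, hM⟩ := hc
  have hrad : 1 ≤ (ofScalars 𝕜 c).radius := by
    simpa using (ofScalars 𝕜 c).le_radius_of_bound M (r := 1) fun n => by
      simpa using hM ⟨n, rfl⟩
  convert (ofScalars 𝕜 c).hasFPowerSeriesOnBall (zero_lt_one.trans_le hrad)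
    |>.mono zero_lt_one hrad using 1
  exact ((ofScalarsSum_eq_tsum c).trans (by simp only [smul_eq_mul])).symm

theorem analyticOnNhd_tsum_mul_pow {c : ℕ → 𝕜} (hc : BddAbove (Set.range fun n => ‖c n‖)) :
    AnalyticOnNhd 𝕜 (fun w => ∑' n, c n * w ^ n) (ball 0 1) := by
  have := (hasFPowerSeriesOnBall_tsum_mul_pow hc).analyticOnNhd
  rwa [← ENNReal.coe_one, eball_coe, NNReal.coe_one] at this

theorem eq_of_tsum_mul_pow_eq {c c' : ℕ → 𝕜} (hc : BddAbove (Set.range fun n => ‖c n‖))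
    (hc' : BddAbove (Set.range fun n => ‖c' n‖))
    (h : ∀ w : 𝕜, ‖w‖ < 1 → ∑' n, c n * w ^ n = ∑' n, c' n * w ^ n) : c = c' := by
  refine (ofScalars_series_eq_iff 𝕜 c c').mp ?_
  refine HasFPowerSeriesAt.eq_formalMultilinearSeries_of_eventually
    (hasFPowerSeriesOnBall_tsum_mul_pow hc).hasFPowerSeriesAt
    (hasFPowerSeriesOnBall_tsum_mul_pow hc').hasFPowerSeriesAt ?_
  filter_upwards [ball_mem_nhds 0 one_pos] with w hw using h w (mem_ball_zero_iff.mp hw)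

end PowerSeries

theorem norm_le_of_forall_mul_add_ne_zero {𝕜 : Type*} [NormedField 𝕜] {A B : 𝕜}
    (h : ∀ w : 𝕜, ‖w‖ < 1 → B * w + A ≠ 0) : ‖B‖ ≤ ‖A‖ := by
  by_contra! hlt
  have hB : B ≠ 0 := norm_pos_iff.mp ((norm_nonneg A).trans_lt hlt)
  refine h (-A / B) ?_ (by field_simp; ring)
  rw [norm_div, norm_neg]
  exact (div_lt_one (norm_pos_iff.mpr hB)).mpr hlt

section Rational

variable {𝕜 : Type*} [NontriviallyNormedField 𝕜] [CompleteSpace 𝕜]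
  {q : ℕ → 𝕜} {A B K : 𝕜}

theorem eq_zero_of_tsum_mul_pow_mul_eq_of_norm_eq (hq : Tendsto q atTop (𝓝 0)) (hA : A ≠ 0)
    (hBA : ‖B‖ = ‖A‖) (h : ∀ w : 𝕜, ‖w‖ < 1 → (∑' n, q n * w ^ n) * (B * w + A) = K) :
    K = 0 := by
  set u := -B / A
  have hu : ‖u‖ = 1 := by rw [norm_div, norm_neg, hBA, div_self (norm_ne_zero_iff.mpr hA)]
  have hnorm : ∀ n, ‖K / A * u ^ n‖ = ‖K / A‖ := by simp [hu]
  have hbdd : BddAbove (Set.range fun n => ‖K / A * u ^ n‖) := ⟨‖K / A‖, by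
    rintro _ ⟨n, rfl⟩
    exact (hnorm n).le⟩
  have hcoeff : q = fun n => K / A * u ^ n := by
    refine eq_of_tsum_mul_pow_eq hq.norm.bddAbove_range hbdd fun w hw => ?_
    have huw : ‖u * w‖ < 1 := by rwa [norm_mul, hu, one_mul]
    have hden : B * w + A ≠ 0 := by
      intro h0
      have : ‖B * w‖ < ‖A‖ := by
        rw [norm_mul, hBA]
        exact mul_lt_of_lt_one_right (norm_pos_iff.mpr hA) hw
      rw [eq_neg_of_add_eq_zero_left h0, norm_neg] at this
      exact this.false
    calc ∑' n, q n * w ^ n = K / (B * w + A) := by rw [← h w hw, mul_div_cancel_right₀ _ hden]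
      _ = K / A * (1 - u * w)⁻¹ := by
        rw [show 1 - u * w = (B * w + A) / A by simp only [u]; field_simp; ring, inv_div]
        field_simp
      _ = ∑' n, K / A * u ^ n * w ^ n := by
        simp_rw [mul_assoc, ← mul_pow]
        rw [tsum_mul_left, tsum_geometric_of_norm_lt_one huw]
  have hlim : Tendsto (fun _ : ℕ => ‖K / A‖) atTop (𝓝 0) := by
    simpa [hcoeff, hnorm] using hq.norm
  have := tendsto_nhds_unique tendsto_const_nhds hlim
  simpa [hA] using this

theorem norm_lt_of_tsum_mul_pow_mul_eq (hq : Tendsto q atTop (𝓝 0)) (hK : K ≠ 0)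
    (h : ∀ w : 𝕜, ‖w‖ < 1 → (∑' n, q n * w ^ n) * (B * w + A) = K) : ‖B‖ < ‖A‖ := by
  have hle : ‖B‖ ≤ ‖A‖ := norm_le_of_forall_mul_add_ne_zero fun w hw h0 => by
    rw [← h w hw, h0, mul_zero] at hK
    exact hK rfl
  have hA : A ≠ 0 := by
    rintro rfl
    exact hK (by simpa using (h 0 (by simp)).symm)
  exact hle.lt_of_ne fun hBA => hK (eq_zero_of_tsum_mul_pow_mul_eq_of_norm_eq hq hA hBA h)

end Rational

section Moebius

variable {f : ℂ → ℂ} {A B C D : ℂ}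

theorem eventually_mul_eq_of_comp_moebius_eq (hΔ : A * D - B * C ≠ 0)
    (hden : ∀ z : ℂ, ‖z‖ < 1 → -B * z + D ≠ 0)
    (heq : ∀ z : ℂ, ‖z‖ < 1 → f ((A * z - C) / (-B * z + D)) = -B * z + D) :
    ∀ᶠ w in 𝓝 (-C / D), f w * (B * w + A) = A * D - B * C := by
  have hD : D ≠ 0 := by simpa using hden 0 (by simp)
  have hBA : B * (-C / D) + A ≠ 0 := by
    rw [show B * (-C / D) + A = (A * D - B * C) / D by field_simp; ring]
    exact div_ne_zero hΔ hD
  -- `w ↦ (D w + C) / (B w + A)` inverts `σ` and sends `σ 0 = -C / D` to `0`.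
  have hinv : Tendsto (fun w => (D * w + C) / (B * w + A)) (𝓝 (-C / D)) (𝓝 0) := by
    have hcont : ContinuousAt (fun w => (D * w + C) / (B * w + A)) (-C / D) := by
      fun_prop (disch := exact hBA)
    convert hcont.tendsto using 2
    simp [mul_div_cancel₀ _ hD]
  filter_upwards [hinv (ball_mem_nhds 0 one_pos),
    (by fun_prop : Continuous fun w => B * w + A).continuousAt.eventually_ne hBA] with w hz hw
  set z := (D * w + C) / (B * w + A)
  replace hz : ‖z‖ < 1 := mem_ball_zero_iff.mp hz
  have hzw : z * (B * w + A) = D * w + C := div_mul_cancel₀ _ hw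
  have hσz : (A * z - C) / (-B * z + D) = w := by
    rw [div_eq_iff (hden z hz)]
    linear_combination hzw
  calc f w * (B * w + A) = (-B * z + D) * (B * w + A) := by rw [← heq z hz, hσz]
    _ = A * D - B * C := by linear_combination -B * hzw

theorem mul_eq_of_comp_moebius_eq (hf : AnalyticOnNhd ℂ f (ball 0 1)) (hΔ : A * D - B * C ≠ 0)
    (hσ : ∀ z : ℂ, ‖z‖ < 1 →
      -B * z + D ≠ 0 ∧ ‖(A * z - C) / (-B * z + D)‖ < 1)
    (heq : ∀ z : ℂ, ‖z‖ < 1 → f ((A * z - C) / (-B * z + D)) = -B * z + D) (w : ℂ)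
    (hw : ‖w‖ < 1) : f w * (B * w + A) = A * D - B * C := by
  have hσ0 : -C / D ∈ ball (0 : ℂ) 1 := by simpa using (hσ 0 (by simp)).2
  have hlin : AnalyticOnNhd ℂ (fun w => B * w + A) (ball 0 1) := fun w _ => by fun_prop
  refine (hf.mul hlin).eqOn_of_preconnected_of_eventuallyEq analyticOnNhd_const
    (convex_ball 0 1).isPreconnected hσ0 ?_ (mem_ball_zero_iff.mpr hw)
  exact eventually_mul_eq_of_comp_moebius_eq hΔ (fun z hz => (hσ z hz).1) heq

end Moebius

theorem zero_in_disk_of_one_in_range_general (a b c d : ℂ)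
    (hdet : a * d - b * c ≠ 0)
    (hσself : ∀ z : ℂ, ‖z‖ < 1 →
      -conj b * z + conj d ≠ 0 ∧
      ‖(conj a * z - conj c) / (-conj b * z + conj d)‖ < 1)
    (q : ℕ → ℂ) (hq : Summable fun n => (‖q n‖) ^ 2)
    (heq : ∀ z : ℂ, ‖z‖ < 1 →
      (∑' n : ℕ, q n * ((conj a * z - conj c) / (-conj b * z + conj d)) ^ n) =
        -conj b * z + conj d) :
    ‖b‖ < ‖a‖ ∧ ‖-b / a‖ < 1 := by
  have hΔ : conj a * conj d - conj b * conj c ≠ 0 := by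
    simpa [← map_mul, ← map_sub] using hdet
  have hq0 : Tendsto q atTop (𝓝 0) := by
    simpa [tendsto_zero_iff_norm_tendsto_zero] using hq.tendsto_atTop_zero.sqrt
  have hlt : ‖conj b‖ < ‖conj a‖ := norm_lt_of_tsum_mul_pow_mul_eq hq0 hΔ
    (mul_eq_of_comp_moebius_eq (analyticOnNhd_tsum_mul_pow hq0.norm.bddAbove_range) hΔ hσself heq)
  rw [Complex.norm_conj, Complex.norm_conj] at hlt
  refine ⟨hlt, ?_⟩
  rw [norm_div, norm_neg]
  exact (div_lt_one ((norm_nonneg b).trans_lt hlt)).mpr hlt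

/-- Let `φ(z) = (az+b)/(cz+d)` (with `ad - bc ≠ 0`, `b ≠ 0`) be a linear-fractional
selfmap of the unit disk, and let `σ(z) = (conj(a)z - conj(c))/(-conj(b)z + conj(d))`
be its Cowen adjoint, a selfmap of the disk.  If an `H²` function
`q(z) = ∑ qₙ zⁿ` (i.e. `∑ |qₙ|² < ∞`) satisfies `q(σ(z)) = -conj(b)z + conj(d)` on
the disk, then `|b| < |a|`; in particular the zero `-b/a` of `φ` lies in the disk. -/
theorem zero_in_disk_of_one_in_range (a b c d : ℂ)
    (hdet : a * d - b * c ≠ 0) (hb : b ≠ 0)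
    (hself : ∀ z : ℂ, ‖z‖ < 1 →
      c * z + d ≠ 0 ∧ ‖(a * z + b) / (c * z + d)‖ < 1)
    (hσself : ∀ z : ℂ, ‖z‖ < 1 →
      -conj b * z + conj d ≠ 0 ∧
      ‖(conj a * z - conj c) / (-conj b * z + conj d)‖ < 1)
    (q : ℕ → ℂ) (hq : Summable fun n => (‖q n‖) ^ 2)
    (heq : ∀ z : ℂ, ‖z‖ < 1 →
      (∑' n : ℕ, q n * ((conj a * z - conj c) / (-conj b * z + conj d)) ^ n) =
        -conj b * z + conj d) :
    ‖b‖ < ‖a‖ ∧ ‖-b / a‖ < 1 :=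
  zero_in_disk_of_one_in_range_general a b c d hdet hσself q hq heq
end
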